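/- arXiv:1912.04551 — 2 statements merged into one kernel-verified Lean document; each statement's English description precedes it below -/
import Mathlib

section
/- Let d ≥ 1, V = (ℤ/3ℤ)^d, r = (3^d − 1)/2, with π_1,...,π_r : V → ℤ/3ℤ surjective linear maps with pairwise distinct kernels, ⋄ : {0,...,r}² → {0,...,r} a binary operation with a⋄a = 0 and x ↦ a⋄x bijective for every a, and σ_{ij} permutations of ℤ/3ℤ for 0 ≤ i < j ≤ r with σ_{ji} := σ_{ij}^{−1}. Let Ω := V × {0,...,r}, S := {((u,i),(v,j)) ∈ Ω×Ω : i = j and u ≠ v}, and R := {((u,i),(v,j)) : i ≠ j and σ_{ij}(π_{i⋄j}(u)) = π_{j⋄i}(v)}. Then the partition of Ω×Ω into the four classes 1_Ω, S, R, and Ω×Ω ∖ (1_Ω ∪ S ∪ R) is a symmetric association scheme: a homogeneous coherent configuration all of whose classes are symmetric relations. -/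
open Matrix

noncomputable section

namespace JordanPaper

open scoped Classical

variable {Ω : Type*}

open Function

/-- card of fibers of a surjective additive hom -/
lemma card_fiber_mul {M N : Type*} [AddCommGroup M] [AddCommGroup N] [Finite M]
    (f : M →+ N) (hf : Surjective ⇑f) (b : N) :
    Nat.card N * Nat.card {m : M // f m = b} = Nat.card M := by
  obtain ⟨m₀, hm₀⟩ := hf b
  have e : f.ker ≃ {m : M // f m = b} := by
    refine ⟨fun x => ⟨x.1 + m₀, ?_⟩, fun m => ⟨m.1 - m₀, ?_⟩, fun x => ?_, fun m => ?_⟩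
    · rw [_root_.map_add, AddMonoidHom.mem_ker.mp x.2, hm₀, zero_add]
    · rw [AddMonoidHom.mem_ker, _root_.map_sub, m.2, hm₀, sub_self]
    · ext; simp
    · ext; simp
  rw [AddSubgroup.card_eq_card_quotient_mul_card_addSubgroup f.ker,
    Nat.card_congr (QuotientAddGroup.quotientKerEquivOfSurjective f hf).toEquiv,
    Nat.card_congr e]

lemma card_fiber_mul_lin {M N : Type*} [AddCommGroup M] [AddCommGroup N] [Module (ZMod 3) M]
    [Module (ZMod 3) N] [Finite M] (f : M →ₗ[ZMod 3] N) (hf : Surjective ⇑f) (b : N) :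
    Nat.card N * Nat.card {m : M // f m = b} = Nat.card M :=
  card_fiber_mul f.toAddMonoidHom hf b

lemma card_of_iff {A : Type*} {p q : A → Prop} (h : ∀ a, p a ↔ q a) :
    Nat.card {a // p a} = Nat.card {a // q a} :=
  Nat.card_congr (Equiv.subtypeEquivRight h)

lemma card_false {A : Type*} {p : A → Prop} (h : ∀ a, ¬ p a) :
    Nat.card {a // p a} = 0 := by
  haveI : IsEmpty {a // p a} := ⟨fun x => h x.1 x.2⟩
  exact Nat.card_of_isEmpty

lemma card_eq_pt {A : Type*} (b : A) : Nat.card {a : A // a = b} = 1 := by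
  haveI : Unique {a : A // a = b} := ⟨⟨⟨b, rfl⟩⟩, by rintro ⟨x, rfl⟩; rfl⟩
  exact Nat.card_unique

lemma card_not {A : Type*} [Fintype A] (p : A → Prop) :
    Nat.card {a // ¬ p a} = Nat.card A - Nat.card {a // p a} := by
  classical
  simp [Nat.card_eq_fintype_card, Fintype.card_subtype_compl]

lemma card_ne_pt {A : Type*} [Fintype A] (b : A) :
    Nat.card {a : A // a ≠ b} = Nat.card A - 1 := by
  rw [card_not (fun a => a = b), card_eq_pt]

lemma card_split {A : Type*} [Fintype A] (E F : A → Prop) :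
    Nat.card {a // E a} = Nat.card {a // E a ∧ F a} + Nat.card {a // E a ∧ ¬ F a} := by
  classical
  simp only [Nat.card_eq_fintype_card, Fintype.card_subtype]
  rw [← Finset.filter_filter, ← Finset.filter_filter,
    Finset.card_filter_add_card_filter_not]

lemma card_prod_sum {A B : Type*} [Fintype A] [Fintype B] (Q : A × B → Prop) :
    Nat.card {x : A × B // Q x} = ∑ b : B, Nat.card {a : A // Q (a, b)} := by
  classical
  have e0 : {x : A × B // Q x} ≃ {y : B × A // Q (y.2, y.1)} :=
    (Equiv.prodComm A B).subtypeEquiv (fun x => Iff.rfl)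
  have e1 := Equiv.subtypeProdEquivSigmaSubtype (fun (b : B) (a : A) => Q (a, b))
  rw [Nat.card_congr (e0.trans e1), Nat.card_eq_fintype_card, Fintype.card_sigma]
  exact Finset.sum_congr rfl (fun b _ => (Nat.card_eq_fintype_card).symm)


section Counting
variable {d r : ℕ} (π : Fin (r + 1) → ((Fin d → ZMod 3) →ₗ[ZMod 3] ZMod 3))

lemma cardV : Nat.card (Fin d → ZMod 3) = 3 ^ d := by
  simp [Nat.card_eq_fintype_card]

lemma fib1 (hπsurj : ∀ i : Fin (r + 1), i ≠ 0 → Function.Surjective (π i))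
    {k : Fin (r + 1)} (hk : k ≠ 0) (a : ZMod 3) :
    Nat.card {w : Fin d → ZMod 3 // π k w = a} = 3 ^ d / 3 := by
  have h := card_fiber_mul_lin (π k) (hπsurj k hk) a
  rw [cardV] at h
  have h3 : Nat.card (ZMod 3) = 3 := by simp [Nat.card_eq_fintype_card]
  rw [h3] at h
  omega


lemma fib2 (hπsurj : ∀ i : Fin (r + 1), i ≠ 0 → Function.Surjective (π i))
    (hπker : ∀ i j : Fin (r + 1), i ≠ 0 → j ≠ 0 → i ≠ j →
      LinearMap.ker (π i) ≠ LinearMap.ker (π j))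
    {k l : Fin (r + 1)} (hk : k ≠ 0) (hl : l ≠ 0) (hkl : k ≠ l) (a b : ZMod 3) :
    Nat.card {w : Fin d → ZMod 3 // π k w = a ∧ π l w = b} = 3 ^ d / 9 := by
  haveI : Fact (Nat.Prime 3) := ⟨by norm_num⟩
  have key : ∀ k l : Fin (r+1), k ≠ 0 → l ≠ 0 → k ≠ l →
      ∃ x, π k x = 0 ∧ π l x ≠ 0 := by
    intro k l hk hl hkl
    by_contra h
    push_neg at h
    apply hπker k l hk hl hkl
    have hsub : (LinearMap.ker (π k) : Set (Fin d → ZMod 3)) ⊆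
        (LinearMap.ker (π l) : Set (Fin d → ZMod 3)) := by
      intro x hx
      simp only [SetLike.mem_coe, LinearMap.mem_ker] at hx ⊢
      exact h x hx
    have hck : Nat.card {w : Fin d → ZMod 3 // π k w = 0} = 3 ^ d / 3 := fib1 π hπsurj hk 0
    have hcl : Nat.card {w : Fin d → ZMod 3 // π l w = 0} = 3 ^ d / 3 := fib1 π hπsurj hl 0
    have hnk : (LinearMap.ker (π k) : Set (Fin d → ZMod 3)).ncard =
        (LinearMap.ker (π l) : Set (Fin d → ZMod 3)).ncard := by
      rw [← Nat.card_coe_set_eq, ← Nat.card_coe_set_eq]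
      have e1 : Nat.card (LinearMap.ker (π k) : Set (Fin d → ZMod 3)) =
          Nat.card {w : Fin d → ZMod 3 // π k w = 0} :=
        card_of_iff (fun w => by simp [LinearMap.mem_ker])
      have e2 : Nat.card (LinearMap.ker (π l) : Set (Fin d → ZMod 3)) =
          Nat.card {w : Fin d → ZMod 3 // π l w = 0} :=
        card_of_iff (fun w => by simp [LinearMap.mem_ker])
      rw [e1, e2, hck, hcl]
    have heq : (LinearMap.ker (π k) : Set (Fin d → ZMod 3)) =
        (LinearMap.ker (π l) : Set (Fin d → ZMod 3)) :=
      Set.eq_of_subset_of_ncard_le hsub (le_of_eq hnk.symm)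
        (Set.toFinite (LinearMap.ker (π l) : Set (Fin d → ZMod 3)))
    exact SetLike.coe_injective heq
  obtain ⟨x, hx0, hxl⟩ := key k l hk hl hkl
  obtain ⟨y, hy0, hyk⟩ := key l k hl hk (Ne.symm hkl)
  set f := (π k).prod (π l) with hf_def
  have hf : Surjective ⇑f := by
    intro p
    refine ⟨(p.1 * (π k y)⁻¹) • y + (p.2 * (π l x)⁻¹) • x, ?_⟩
    have h1 : π k ((p.1 * (π k y)⁻¹) • y + (p.2 * (π l x)⁻¹) • x) = p.1 := by
      simp [_root_.map_add, _root_.map_smul, hx0, smul_eq_mul, mul_assoc, inv_mul_cancel₀ hyk]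
    have h2 : π l ((p.1 * (π k y)⁻¹) • y + (p.2 * (π l x)⁻¹) • x) = p.2 := by
      simp [_root_.map_add, _root_.map_smul, hy0, smul_eq_mul, mul_assoc, inv_mul_cancel₀ hxl]
    have : f ((p.1 * (π k y)⁻¹) • y + (p.2 * (π l x)⁻¹) • x) = (p.1, p.2) := by
      rw [hf_def, LinearMap.prod_apply]; exact Prod.ext h1 h2
    rw [this]
  have h := card_fiber_mul_lin f hf (a, b)
  rw [cardV] at h
  have h9 : Nat.card (ZMod 3 × ZMod 3) = 9 := by
    rw [Nat.card_eq_fintype_card]; simp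
  rw [h9] at h
  have hbr : Nat.card {m : Fin d → ZMod 3 // f m = (a, b)} =
      Nat.card {w : Fin d → ZMod 3 // π k w = a ∧ π l w = b} :=
    card_of_iff (fun w => by simp [hf_def, LinearMap.prod_apply, Pi.prod, Prod.mk.injEq])
  rw [hbr] at h
  omega

lemma hyperplane_count (hd : 1 ≤ d) (hr : r = (3 ^ d - 1) / 2)
    (hπsurj : ∀ i : Fin (r + 1), i ≠ 0 → Function.Surjective (π i))
    (hπker : ∀ i j : Fin (r + 1), i ≠ 0 → j ≠ 0 → i ≠ j →
      LinearMap.ker (π i) ≠ LinearMap.ker (π j))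
    {x : Fin d → ZMod 3} (hx : x ≠ 0) :
    Nat.card {k : Fin (r + 1) // k ≠ 0 ∧ π k x = 0} = (3 ^ d / 3 - 1) / 2 := by
  haveI : Fact (Nat.Prime 3) := ⟨by norm_num⟩
  have h2r : 2 * r + 1 = 3 ^ d := by
    have hodd : Odd (3 ^ d) := Odd.pow ⟨1, rfl⟩
    obtain ⟨c, hc⟩ := hodd
    subst hr; omega
  haveI hfinDual : Finite ((Fin d → ZMod 3) →ₗ[ZMod 3] ZMod 3) :=
    Finite.of_injective _ DFunLike.coe_injective
  have cardDual : Nat.card ((Fin d → ZMod 3) →ₗ[ZMod 3] ZMod 3) = 3 ^ d := by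
    have e := ((Pi.basisFun (ZMod 3) (Fin d)).constr (ZMod 3) :
      (Fin d → ZMod 3) ≃ₗ[ZMod 3] ((Fin d → ZMod 3) →ₗ[ZMod 3] ZMod 3))
    rw [← Nat.card_congr e.toEquiv, cardV]
  set ev : ((Fin d → ZMod 3) →ₗ[ZMod 3] ZMod 3) →ₗ[ZMod 3] ZMod 3 :=
    { toFun := fun φ => φ x, map_add' := fun φ ψ => rfl, map_smul' := fun c φ => rfl }
    with hev_def
  obtain ⟨t, ht⟩ : ∃ t, x t ≠ 0 := by
    by_contra h; push_neg at h; exact hx (funext fun t => h t)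
  have hev : Surjective ⇑ev := by
    intro c
    refine ⟨c • ((x t)⁻¹ • (LinearMap.proj t :
      (Fin d → ZMod 3) →ₗ[ZMod 3] ZMod 3)), ?_⟩
    show (c • ((x t)⁻¹ • (LinearMap.proj t : (Fin d → ZMod 3) →ₗ[ZMod 3] ZMod 3))) x = c
    rw [LinearMap.smul_apply, LinearMap.smul_apply, LinearMap.proj_apply, smul_eq_mul,
      smul_eq_mul, inv_mul_cancel₀ ht, mul_one]
  have hker3 : 3 * Nat.card {φ : (Fin d → ZMod 3) →ₗ[ZMod 3] ZMod 3 // φ x = 0} = 3 ^ d := by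
    have h := card_fiber_mul_lin ev hev 0
    have h3 : Nat.card (ZMod 3) = 3 := by rw [Nat.card_eq_fintype_card]; simp
    rw [h3, cardDual] at h
    exact h
  -- the bijection with pairs
  set Φ : ({k : Fin (r + 1) // k ≠ 0} × {c : ZMod 3 // c ≠ 0}) →
      {φ : (Fin d → ZMod 3) →ₗ[ZMod 3] ZMod 3 // φ ≠ 0} := fun p =>
    ⟨p.2.1 • π p.1.1, by
      intro h0
      obtain ⟨w, hw⟩ := hπsurj p.1.1 p.1.2 1
      have := DFunLike.congr_fun h0 w
      rw [LinearMap.smul_apply, hw, smul_eq_mul, mul_one, LinearMap.zero_apply] at this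
      exact p.2.2 this⟩ with hΦ_def
  have hΦinj : Injective Φ := by
    rintro ⟨⟨k, hk⟩, ⟨c, hc⟩⟩ ⟨⟨l, hl⟩, ⟨c', hc'⟩⟩ h
    have hE : c • π k = c' • π l := congrArg Subtype.val h
    have hkl : k = l := by
      by_contra hne
      apply hπker k l hk hl hne
      ext w
      have hw := DFunLike.congr_fun hE w
      rw [LinearMap.smul_apply, LinearMap.smul_apply, smul_eq_mul, smul_eq_mul] at hw
      simp only [LinearMap.mem_ker]
      constructor
      · intro h0
        have : c' * π l w = 0 := by rw [← hw, h0, mul_zero]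
        rcases mul_eq_zero.mp this with h' | h'
        · exact absurd h' hc'
        · exact h'
      · intro h0
        have : c * π k w = 0 := by rw [hw, h0, mul_zero]
        rcases mul_eq_zero.mp this with h' | h'
        · exact absurd h' hc
        · exact h'
    subst hkl
    obtain ⟨w, hw⟩ := hπsurj k hk 1
    have hw' := DFunLike.congr_fun hE w
    rw [LinearMap.smul_apply, LinearMap.smul_apply, hw, smul_eq_mul, smul_eq_mul,
      mul_one, mul_one] at hw'
    subst hw'
    rfl
  haveI := Fintype.ofFinite ((Fin d → ZMod 3) →ₗ[ZMod 3] ZMod 3)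
  have cardDom : Nat.card ({k : Fin (r + 1) // k ≠ 0} × {c : ZMod 3 // c ≠ 0}) = r * 2 := by
    rw [Nat.card_prod, card_ne_pt, card_ne_pt]
    have : Nat.card (Fin (r + 1)) = r + 1 := by rw [Nat.card_eq_fintype_card]; simp
    have h3 : Nat.card (ZMod 3) = 3 := by rw [Nat.card_eq_fintype_card]; simp
    rw [this, h3]
    omega
  have cardCod : Nat.card {φ : (Fin d → ZMod 3) →ₗ[ZMod 3] ZMod 3 // φ ≠ 0} = 3 ^ d - 1 := by
    rw [card_ne_pt, cardDual]
  have hΦbij : Bijective Φ := by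
    rw [Fintype.bijective_iff_injective_and_card]
    refine ⟨hΦinj, ?_⟩
    rw [← Nat.card_eq_fintype_card, ← Nat.card_eq_fintype_card, cardDom, cardCod]
    omega
  set E := Equiv.ofBijective Φ hΦbij with hE_def
  have e4 : {p : {k : Fin (r + 1) // k ≠ 0} × {c : ZMod 3 // c ≠ 0} // π p.1.1 x = 0} ≃
      {φ : {φ : (Fin d → ZMod 3) →ₗ[ZMod 3] ZMod 3 // φ ≠ 0} // φ.1 x = 0} := by
    refine E.subtypeEquiv (fun p => ?_)
    have : (E p).1 x = p.2.1 * π p.1.1 x := rfl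
    rw [this]
    constructor
    · intro h; rw [h, mul_zero]
    · intro h
      rcases mul_eq_zero.mp h with h' | h'
      · exact absurd h' p.2.2
      · exact h'
  have e5 : {p : {k : Fin (r + 1) // k ≠ 0} × {c : ZMod 3 // c ≠ 0} // π p.1.1 x = 0} ≃
      ({k : Fin (r + 1) // k ≠ 0 ∧ π k x = 0} × {c : ZMod 3 // c ≠ 0}) :=
    { toFun := fun p => (⟨p.1.1.1, p.1.1.2, p.2⟩, p.1.2)
      invFun := fun z => ⟨(⟨z.1.1, z.1.2.1⟩, z.2), z.1.2.2⟩
      left_inv := fun p => rfl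
      right_inv := fun z => rfl }
  have e6 : {φ' : {φ : (Fin d → ZMod 3) →ₗ[ZMod 3] ZMod 3 // φ ≠ 0} // φ'.1 x = 0} ≃
      {φ : (Fin d → ZMod 3) →ₗ[ZMod 3] ZMod 3 // φ ≠ 0 ∧ φ x = 0} :=
    Equiv.subtypeSubtypeEquivSubtypeInter
      (fun φ : (Fin d → ZMod 3) →ₗ[ZMod 3] ZMod 3 => φ ≠ 0) (fun φ => φ x = 0)
  have hcount1 : Nat.card {φ : (Fin d → ZMod 3) →ₗ[ZMod 3] ZMod 3 // φ ≠ 0 ∧ φ x = 0} =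
      Nat.card {k : Fin (r + 1) // k ≠ 0 ∧ π k x = 0} * 2 := by
    rw [← Nat.card_congr e6, ← Nat.card_congr e4, Nat.card_congr e5, Nat.card_prod]
    congr 1
    rw [card_ne_pt]
    have h3 : Nat.card (ZMod 3) = 3 := by rw [Nat.card_eq_fintype_card]; simp
    rw [h3]
  have hsplit := card_split (fun φ : (Fin d → ZMod 3) →ₗ[ZMod 3] ZMod 3 => φ x = 0)
    (fun φ => φ = 0)
  have hz : Nat.card {φ : (Fin d → ZMod 3) →ₗ[ZMod 3] ZMod 3 // φ x = 0 ∧ φ = 0} = 1 := by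
    rw [card_of_iff (q := fun φ : (Fin d → ZMod 3) →ₗ[ZMod 3] ZMod 3 => φ = 0)
      (fun φ => ⟨fun h => h.2, fun h => ⟨by rw [h]; rfl, h⟩⟩), card_eq_pt]
  have hcomm : Nat.card {φ : (Fin d → ZMod 3) →ₗ[ZMod 3] ZMod 3 // φ x = 0 ∧ ¬ φ = 0} =
      Nat.card {φ : (Fin d → ZMod 3) →ₗ[ZMod 3] ZMod 3 // φ ≠ 0 ∧ φ x = 0} :=
    card_of_iff (fun φ => and_comm)
  rw [hz, hcomm, hcount1] at hsplit
  rw [hsplit] at hker3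
  omega


end Counting

section Sums
open Finset

lemma sum_one {n : ℕ} (g : Fin (n + 1) → ℕ) (i : Fin (n + 1)) {A C : ℕ}
    (hA : g i = A) (hC : ∀ m, m ≠ i → g m = C) : ∑ m, g m = A + n * C := by
  classical
  rw [← Finset.add_sum_erase _ g (Finset.mem_univ i), hA]
  congr 1
  rw [Finset.sum_congr rfl (fun m hm => hC m (Finset.ne_of_mem_erase hm)),
    Finset.sum_const, smul_eq_mul, Finset.card_erase_of_mem (Finset.mem_univ i),
    Finset.card_univ, Fintype.card_fin]
  congr 1

lemma sum_two {n : ℕ} (g : Fin (n + 1) → ℕ) (i j : Fin (n + 1)) (hij : j ≠ i) {A B C : ℕ}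
    (hA : g i = A) (hB : g j = B) (hC : ∀ m, m ≠ i → m ≠ j → g m = C) :
    ∑ m, g m = A + (B + (n - 1) * C) := by
  classical
  rw [← Finset.add_sum_erase _ g (Finset.mem_univ i), hA]
  congr 1
  rw [← Finset.add_sum_erase _ g (Finset.mem_erase.mpr ⟨hij, Finset.mem_univ j⟩), hB]
  congr 1
  rw [Finset.sum_congr rfl (fun m hm => by
      have h1 := Finset.mem_erase.mp hm
      have h2 := Finset.mem_erase.mp h1.2
      exact hC m h2.1 h1.1),
    Finset.sum_const, smul_eq_mul, Finset.card_erase_of_mem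
      (Finset.mem_erase.mpr ⟨hij, Finset.mem_univ j⟩),
    Finset.card_erase_of_mem (Finset.mem_univ i), Finset.card_univ, Fintype.card_fin]
  congr 1

lemma sum_ite_split {n : ℕ} (g : Fin (n + 1) → ℕ) (i : Fin (n + 1)) (p : Fin (n + 1) → Prop)
    [DecidablePred p] {A C1 C2 : ℕ}
    (hA : g i = A) (hC : ∀ m, m ≠ i → g m = if p m then C1 else C2) :
    ∑ m, g m = A + (((Finset.univ.erase i).filter p).card * C1 +
      (n - ((Finset.univ.erase i).filter p).card) * C2) := by
  classical
  rw [← Finset.add_sum_erase _ g (Finset.mem_univ i), hA]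
  congr 1
  rw [Finset.sum_congr rfl (fun m hm => hC m (Finset.ne_of_mem_erase hm)),
    Finset.sum_ite (fun _ => C1) (fun _ => C2), Finset.sum_const, Finset.sum_const,
    smul_eq_mul, smul_eq_mul]
  congr 2
  have htot := Finset.card_filter_add_card_filter_not
    (s := Finset.univ.erase i) (p := p)
  have hcard : (Finset.univ.erase i).card = n := by
    simp
  omega

end Sums

section DiaCount
open Finset
variable {r : ℕ}

lemma count_dia (dia : Fin (r + 1) → Fin (r + 1) → Fin (r + 1))
    (hdia0 : ∀ a, dia a a = 0) (hdiabij : ∀ a, Function.Bijective (dia a))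
    (i : Fin (r + 1)) (p : Fin (r + 1) → Prop) [DecidablePred p] :
    ((Finset.univ.erase i).filter (fun m => p (dia i m))).card =
      Nat.card {k : Fin (r + 1) // k ≠ 0 ∧ p k} := by
  classical
  rw [Nat.card_eq_fintype_card, Fintype.card_subtype]
  apply Finset.card_bij (fun m _ => dia i m)
  · intro m hm
    obtain ⟨hm1, hm2⟩ := Finset.mem_filter.mp hm
    refine Finset.mem_filter.mpr ⟨Finset.mem_univ _, ?_, hm2⟩
    intro h0
    exact (Finset.mem_erase.mp hm1).1 ((hdiabij i).1 (h0.trans (hdia0 i).symm))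
  · intro m₁ hm₁ m₂ hm₂ h
    exact (hdiabij i).1 h
  · intro k hk
    obtain ⟨-, hk0, hkp⟩ := Finset.mem_filter.mp hk
    obtain ⟨m, hm⟩ := (hdiabij i).2 k
    refine ⟨m, Finset.mem_filter.mpr ⟨Finset.mem_erase.mpr ⟨?_, Finset.mem_univ _⟩,
      by rw [hm]; exact hkp⟩, hm⟩
    intro hmi
    apply hk0
    rw [← hm, hmi, hdia0 i]

end DiaCount

section Sigma

lemma sigma_inv {r : ℕ} (σ : Fin (r + 1) → Fin (r + 1) → Equiv.Perm (ZMod 3))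
    (hσ : ∀ i j : Fin (r + 1), i < j → σ j i = (σ i j)⁻¹)
    {i j : Fin (r + 1)} (hij : i ≠ j) (z y : ZMod 3) : σ i j z = y ↔ z = σ j i y := by
  rcases lt_or_gt_of_ne hij with h | h
  · rw [hσ i j h, Equiv.Perm.inv_def]
    exact Iff.symm (Equiv.eq_symm_apply (σ i j))
  · rw [hσ j i h, Equiv.Perm.inv_def]
    exact Equiv.symm_apply_eq (σ j i)

end Sigma


/-- The adjacency matrix (over `F`) of a binary relation on `Ω`. -/
def adj (F : Type*) [Zero F] [One F] (c : Set (Ω × Ω)) : Matrix Ω Ω F :=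
  Matrix.of fun a b => if (a, b) ∈ c then 1 else 0

/-- The all-ones matrix. -/
def allOnes (F : Type*) [One F] : Matrix Ω Ω F :=
  Matrix.of fun _ _ => 1

/-- The diagonal relation `1_Δ` on a subset `Δ ⊆ Ω`. -/
def diagRel (Δ : Set Ω) : Set (Ω × Ω) := {p | p.1 = p.2 ∧ p.1 ∈ Δ}

/-- The transposed relation. -/
def transposeRel (c : Set (Ω × Ω)) : Set (Ω × Ω) := {p | (p.2, p.1) ∈ c}

/-- `outSet c α = c(α) = {β | (α,β) ∈ c}`. -/
def outSet (c : Set (Ω × Ω)) (α : Ω) : Set Ω := {β | (α, β) ∈ c}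

/-- A partition of `Ω × Ω` into nonempty pairwise disjoint classes. -/
def IsPartition (P : Set (Set (Ω × Ω))) : Prop :=
  (∀ c ∈ P, c.Nonempty) ∧ (∀ c ∈ P, ∀ d ∈ P, c ≠ d → c ∩ d = ∅) ∧ ⋃₀ P = Set.univ

/-- A partition of `Δ × Δ` into nonempty pairwise disjoint classes. -/
def IsPartitionOn (Δ : Set Ω) (P : Set (Set (Ω × Ω))) : Prop :=
  (∀ c ∈ P, c.Nonempty) ∧ (∀ c ∈ P, ∀ d ∈ P, c ≠ d → c ∩ d = ∅) ∧ ⋃₀ P = Δ ×ˢ Δ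

/-- A rainbow: a partition of `Ω × Ω` such that the diagonal is a union of classes
and the set of classes is closed under transposition. -/
def IsRainbow (P : Set (Set (Ω × Ω))) : Prop :=
  IsPartition P ∧
  (∀ c ∈ P, (c ∩ diagRel (Set.univ : Set Ω)).Nonempty → c ⊆ diagRel (Set.univ : Set Ω)) ∧
  (∀ c ∈ P, transposeRel c ∈ P)

/-- `|c(α) ∩ dᵀ(β)|`. -/
def cnum (c d : Set (Ω × Ω)) (α β : Ω) : ℕ :=
  (outSet c α ∩ outSet (transposeRel d) β).ncard

/-- `|c(α) ∩ dᵀ(β)| + |d(α) ∩ cᵀ(β)|`. -/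
def jnum (c d : Set (Ω × Ω)) (α β : Ω) : ℕ :=
  cnum c d α β + cnum d c α β

/-- The coherence (intersection-number) condition. -/
def IsCoherentCond (P : Set (Set (Ω × Ω))) : Prop :=
  ∀ c ∈ P, ∀ d ∈ P, ∀ f ∈ P, ∀ p ∈ f, ∀ q ∈ f,
    cnum c d (p : Ω × Ω).1 (p : Ω × Ω).2 = cnum c d (q : Ω × Ω).1 (q : Ω × Ω).2

/-- The Jordan (symmetrized intersection-number) condition. -/
def IsJordanCond (P : Set (Set (Ω × Ω))) : Prop :=
  ∀ c ∈ P, ∀ d ∈ P, ∀ f ∈ P, ∀ p ∈ f, ∀ q ∈ f,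
    jnum c d (p : Ω × Ω).1 (p : Ω × Ω).2 = jnum c d (q : Ω × Ω).1 (q : Ω × Ω).2

/-- A coherent configuration. -/
def IsCoherentConfig (P : Set (Set (Ω × Ω))) : Prop := IsRainbow P ∧ IsCoherentCond P

/-- A Jordan configuration. -/
def IsJordanConfig (P : Set (Set (Ω × Ω))) : Prop := IsRainbow P ∧ IsJordanCond P

/-- An association scheme on a subset `Δ` (homogeneous coherent configuration on `Δ`). -/
def IsAssocSchemeOn (Δ : Set Ω) (P : Set (Set (Ω × Ω))) : Prop :=
  IsPartitionOn Δ P ∧ diagRel Δ ∈ P ∧ (∀ c ∈ P, transposeRel c ∈ P) ∧ IsCoherentCond P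

/-- The Jordan product of matrices. -/
def jmul (F : Type*) [Field F] [Fintype Ω] (x y : Matrix Ω Ω F) : Matrix Ω Ω F :=
  (2 : F)⁻¹ • (x * y + y * x)

/-- A coherent algebra. -/
def IsCoherentAlgebra (F : Type*) [Field F] [Fintype Ω] [DecidableEq Ω]
    (A : Submodule F (Matrix Ω Ω F)) : Prop :=
  (1 : Matrix Ω Ω F) ∈ A ∧ allOnes F ∈ A ∧ (∀ x ∈ A, xᵀ ∈ A) ∧
  (∀ x ∈ A, ∀ y ∈ A, x * y ∈ A) ∧ (∀ x ∈ A, ∀ y ∈ A, Matrix.hadamard x y ∈ A)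

/-- A coherent Jordan algebra. -/
def IsCoherentJAlgebra (F : Type*) [Field F] [Fintype Ω] [DecidableEq Ω]
    (A : Submodule F (Matrix Ω Ω F)) : Prop :=
  (1 : Matrix Ω Ω F) ∈ A ∧ allOnes F ∈ A ∧ (∀ x ∈ A, xᵀ ∈ A) ∧
  (∀ x ∈ A, ∀ y ∈ A, jmul F x y ∈ A) ∧ (∀ x ∈ A, ∀ y ∈ A, Matrix.hadamard x y ∈ A)

/-- The relation `R(⋄, τ)` of the Wallis–Fon-Der-Flaass construction:
`(u,i) ∼ (v,j)` iff `i ≠ j` and `τ_{ij}(π_{i⋄j}(u)) = π_{j⋄i}(v)`. -/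
def RrelGen (d r : ℕ) (π : Fin (r + 1) → ((Fin d → ZMod 3) →ₗ[ZMod 3] ZMod 3))
    (dia : Fin (r + 1) → Fin (r + 1) → Fin (r + 1))
    (τ : Fin (r + 1) → Fin (r + 1) → Equiv.Perm (ZMod 3)) :
    Set (((Fin d → ZMod 3) × Fin (r + 1)) × ((Fin d → ZMod 3) × Fin (r + 1))) :=
  {p | p.1.2 ≠ p.2.2 ∧ τ p.1.2 p.2.2 (π (dia p.1.2 p.2.2) p.1.1) = π (dia p.2.2 p.1.2) p.2.1}


theorem statement15 (d : ℕ) (hd : 1 ≤ d) (r : ℕ) (hr : r = (3 ^ d - 1) / 2)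
    (π : Fin (r + 1) → ((Fin d → ZMod 3) →ₗ[ZMod 3] ZMod 3))
    (hπsurj : ∀ i : Fin (r + 1), i ≠ 0 → Function.Surjective (π i))
    (hπker : ∀ i j : Fin (r + 1), i ≠ 0 → j ≠ 0 → i ≠ j →
      LinearMap.ker (π i) ≠ LinearMap.ker (π j))
    (dia : Fin (r + 1) → Fin (r + 1) → Fin (r + 1))
    (hdia0 : ∀ a, dia a a = 0)
    (hdiabij : ∀ a, Function.Bijective (dia a))
    (σ : Fin (r + 1) → Fin (r + 1) → Equiv.Perm (ZMod 3))
    (hσ : ∀ i j : Fin (r + 1), i < j → σ j i = (σ i j)⁻¹) :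
    let Ωc := (Fin d → ZMod 3) × Fin (r + 1)
    let R : Set (Ωc × Ωc) := RrelGen d r π dia σ
    let S : Set (Ωc × Ωc) := {p | p.1.2 = p.2.2 ∧ p.1.1 ≠ p.2.1}
    let D : Set (Ωc × Ωc) := diagRel (Set.univ : Set Ωc)
    let T : Set (Ωc × Ωc) := Set.univ \ (D ∪ S ∪ R)
    ([D, S, R, T] : List (Set (Ωc × Ωc))).Pairwise Disjoint ∧
    D.Nonempty ∧ S.Nonempty ∧ R.Nonempty ∧ T.Nonempty ∧
    D ∪ S ∪ R ∪ T = Set.univ ∧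
    transposeRel S = S ∧ transposeRel R = R ∧ transposeRel T = T ∧
    diagRel (Set.univ : Set Ωc) ∈ ({D, S, R, T} : Set (Set (Ωc × Ωc))) ∧
    IsCoherentCond {D, S, R, T} := by
  haveI : Fact (Nat.Prime 3) := ⟨by norm_num⟩
  intro Ωc R S D T
  have hdiane : ∀ i j : Fin (r + 1), i ≠ j → dia i j ≠ 0 := by
    intro i j hij h0
    exact hij (((hdiabij i).1 (h0.trans (hdia0 i).symm)).symm)
  have hσ' : ∀ {i j : Fin (r + 1)}, i ≠ j → ∀ z y, σ i j z = y ↔ z = σ j i y :=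
    fun hij z y => sigma_inv σ hσ hij z y
  have memD : ∀ x : Ωc × Ωc, (x ∈ D ↔ x.1 = x.2) :=
    fun x => ⟨fun h => h.1, fun h => ⟨h, trivial⟩⟩
  have memS : ∀ x : Ωc × Ωc, (x ∈ S ↔ (x.1.2 = x.2.2 ∧ x.1.1 ≠ x.2.1)) := fun x => Iff.rfl
  have memR : ∀ x : Ωc × Ωc, (x ∈ R ↔ (x.1.2 ≠ x.2.2 ∧
      σ x.1.2 x.2.2 (π (dia x.1.2 x.2.2) x.1.1) = π (dia x.2.2 x.1.2) x.2.1)) :=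
    fun x => Iff.rfl
  have memT : ∀ x : Ωc × Ωc, (x ∈ T ↔ (x.1.2 ≠ x.2.2 ∧
      σ x.1.2 x.2.2 (π (dia x.1.2 x.2.2) x.1.1) ≠ π (dia x.2.2 x.1.2) x.2.1)) := by
    intro x
    constructor
    · rintro ⟨-, h⟩
      by_cases hfib : x.1.2 = x.2.2
      · exfalso
        apply h
        by_cases hpt : x.1.1 = x.2.1
        · exact Or.inl (Or.inl ((memD x).mpr (Prod.ext hpt hfib)))
        · exact Or.inl (Or.inr ⟨hfib, hpt⟩)
      · refine ⟨hfib, fun hc => h (Or.inr ⟨hfib, hc⟩)⟩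
    · rintro ⟨h1, h2⟩
      refine ⟨trivial, ?_⟩
      rintro ((h3 | h4) | h5)
      · exact h1 (congrArg Prod.snd ((memD x).mp h3))
      · exact h1 h4.1
      · exact h2 h5.2
  -- symmetry of the classes
  have tD : transposeRel D = D := by
    ext x
    constructor
    · intro h; exact (memD x).mpr ((memD (x.2, x.1)).mp h).symm
    · intro h; exact (memD (x.2, x.1)).mpr ((memD x).mp h).symm
  have tS : transposeRel S = S := by
    ext x
    constructor
    · intro h
      have h' := (memS (x.2, x.1)).mp h
      exact (memS x).mpr ⟨h'.1.symm, fun e => h'.2 e.symm⟩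
    · intro h
      have h' := (memS x).mp h
      exact (memS (x.2, x.1)).mpr ⟨h'.1.symm, fun e => h'.2 e.symm⟩
  have tR : transposeRel R = R := by
    ext x
    constructor
    · intro h
      have h' := (memR (x.2, x.1)).mp h
      exact (memR x).mpr ⟨h'.1.symm, (hσ' h'.1.symm _ _).mpr h'.2.symm⟩
    · intro h
      have h' := (memR x).mp h
      exact (memR (x.2, x.1)).mpr ⟨h'.1.symm, (hσ' h'.1.symm _ _).mpr h'.2.symm⟩
  have tT : transposeRel T = T := by
    ext x
    constructor
    · intro h
      have h' := (memT (x.2, x.1)).mp h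
      refine (memT x).mpr ⟨h'.1.symm, fun hc => h'.2 ?_⟩
      exact ((hσ' h'.1 _ _).mpr hc.symm)
    · intro h
      have h' := (memT x).mp h
      refine (memT (x.2, x.1)).mpr ⟨h'.1.symm, fun hc => h'.2 ?_⟩
      exact ((hσ' h'.1 _ _).mpr hc.symm)
  -- disjointness
  have dDS : Disjoint D S := by
    rw [Set.disjoint_left]
    intro x hx hx'
    exact ((memS x).mp hx').2 (congrArg Prod.fst ((memD x).mp hx))
  have dDR : Disjoint D R := by
    rw [Set.disjoint_left]
    intro x hx hx'
    exact ((memR x).mp hx').1 (congrArg Prod.snd ((memD x).mp hx))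
  have dDT : Disjoint D T := by
    rw [Set.disjoint_left]
    intro x hx hx'
    exact ((memT x).mp hx').1 (congrArg Prod.snd ((memD x).mp hx))
  have dSR : Disjoint S R := by
    rw [Set.disjoint_left]
    intro x hx hx'
    exact ((memR x).mp hx').1 ((memS x).mp hx).1
  have dST : Disjoint S T := by
    rw [Set.disjoint_left]
    intro x hx hx'
    exact ((memT x).mp hx').1 ((memS x).mp hx).1
  have dRT : Disjoint R T := by
    rw [Set.disjoint_left]
    intro x hx hx'
    exact ((memT x).mp hx').2 ((memR x).mp hx).2
  -- nonemptiness
  have h3d : 3 ≤ 3 ^ d := by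
    calc 3 = 3 ^ 1 := (pow_one 3).symm
    _ ≤ 3 ^ d := Nat.pow_le_pow_right (by norm_num) hd
  have hr1 : 1 ≤ r := by omega
  set j1 : Fin (r + 1) := ⟨1, by omega⟩ with hj1def
  have hj10 : j1 ≠ 0 := by
    intro h
    have := congrArg Fin.val h
    simp [hj1def] at this
  have hDne : D.Nonempty := ⟨((0, 0), (0, 0)), (memD _).mpr rfl⟩
  have h01 : (0 : Fin d → ZMod 3) ≠ (fun _ => 1) := by
    intro h
    have := congrFun h ⟨0, hd⟩
    simp only [Pi.zero_apply] at this
    exact zero_ne_one this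
  have hSne : S.Nonempty := ⟨((0, 0), ((fun _ => 1), 0)), (memS _).mpr ⟨rfl, h01⟩⟩
  obtain ⟨v, hv⟩ := hπsurj (dia j1 0) (hdiane j1 0 hj10)
    (σ 0 j1 (π (dia 0 j1) 0))
  have hRne : R.Nonempty := ⟨((0, 0), (v, j1)), (memR _).mpr ⟨Ne.symm hj10, hv.symm⟩⟩
  obtain ⟨v', hv'⟩ := hπsurj (dia j1 0) (hdiane j1 0 hj10)
    (σ 0 j1 (π (dia 0 j1) 0) + 1)
  have hTne : T.Nonempty := by
    refine ⟨((0, 0), (v', j1)), (memT _).mpr ⟨Ne.symm hj10, ?_⟩⟩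
    rw [hv']
    intro h
    exact one_ne_zero (left_eq_add.mp h)
  have hunion : D ∪ S ∪ R ∪ T = Set.univ := by
    rw [Set.union_diff_cancel (Set.subset_univ _)]
  have hpw : ([D, S, R, T] : List (Set (Ωc × Ωc))).Pairwise Disjoint := by
    have m3 : ∀ a' ∈ ([S, R, T] : List (Set (Ωc × Ωc))), Disjoint D a' := by
      intro a' ha'
      simp only [List.mem_cons, List.not_mem_nil, or_false] at ha'
      rcases ha' with rfl | rfl | rfl
      exacts [dDS, dDR, dDT]
    have m2 : ∀ a' ∈ ([R, T] : List (Set (Ωc × Ωc))), Disjoint S a' := by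
      intro a' ha'
      simp only [List.mem_cons, List.not_mem_nil, or_false] at ha'
      rcases ha' with rfl | rfl
      exacts [dSR, dST]
    have m1 : ∀ a' ∈ ([T] : List (Set (Ωc × Ωc))), Disjoint R a' := by
      intro a' ha'
      simp only [List.mem_cons, List.not_mem_nil, or_false] at ha'
      rcases ha' with rfl
      exact dRT
    exact List.Pairwise.cons m3 (List.Pairwise.cons m2 (List.Pairwise.cons m1
      (List.Pairwise.cons (fun a' ha' => absurd ha' List.not_mem_nil)
        List.Pairwise.nil)))
  -- cnum machinery
  have cnum_card : ∀ (c e : Set (Ωc × Ωc)) (α β : Ωc), cnum c e α β =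
      Nat.card {γ : Ωc // (α, γ) ∈ c ∧ (γ, β) ∈ e} := by
    intro c e α β
    rw [cnum, ← Nat.card_coe_set_eq]
    exact Nat.card_congr (Equiv.subtypeEquivRight (fun γ => Iff.rfl))
  have cnum_sum : ∀ (c e : Set (Ωc × Ωc)) (α β : Ωc), cnum c e α β =
      ∑ m : Fin (r + 1), Nat.card
        {w : Fin d → ZMod 3 // (α, (w, m)) ∈ c ∧ ((w, m), β) ∈ e} := by
    intro c e α β
    rw [cnum_card, card_prod_sum
      (fun γ : (Fin d → ZMod 3) × Fin (r + 1) => (α, γ) ∈ c ∧ (γ, β) ∈ e)]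
  have cnum_swap : ∀ (c e : Set (Ωc × Ωc)), transposeRel c = c → transposeRel e = e →
      ∀ α β : Ωc, cnum c e α β = cnum e c β α := by
    intro c e hc he α β
    rw [cnum, cnum, he, hc, Set.inter_comm]
  have cnumD_left : ∀ (e : Set (Ωc × Ωc)) (α β : Ωc), cnum D e α β =
      if (α, β) ∈ e then 1 else 0 := by
    intro e α β
    rw [cnum_card]
    by_cases h : (α, β) ∈ e
    · rw [if_pos h, card_of_iff (q := fun γ : Ωc => γ = α) (fun γ => ?_), card_eq_pt]
      constructor
      · intro hh; exact ((memD _).mp hh.1).symm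
      · rintro rfl; exact ⟨(memD _).mpr rfl, h⟩
    · rw [if_neg h]
      apply card_false
      rintro γ ⟨h1, h2⟩
      have he2 : α = γ := (memD _).mp h1
      rw [← he2] at h2
      exact h h2
  have cnumD_right : ∀ (c : Set (Ωc × Ωc)) (α β : Ωc), cnum c D α β =
      if (α, β) ∈ c then 1 else 0 := by
    intro c α β
    rw [cnum_card]
    by_cases h : (α, β) ∈ c
    · rw [if_pos h, card_of_iff (q := fun γ : Ωc => γ = β) (fun γ => ?_), card_eq_pt]
      constructor
      · intro hh; exact (memD _).mp hh.2
      · rintro rfl; exact ⟨h, (memD _).mpr rfl⟩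
    · rw [if_neg h]
      apply card_false
      rintro γ ⟨h1, h2⟩
      have he2 : γ = β := (memD _).mp h2
      rw [he2] at h1
      exact h h1
  have classes_eqmem : ∀ c ∈ ({D, S, R, T} : Set (Set (Ωc × Ωc))),
      ∀ f ∈ ({D, S, R, T} : Set (Set (Ωc × Ωc))), ∀ x y : Ωc × Ωc, x ∈ f → y ∈ f →
      ((x ∈ c) ↔ (y ∈ c)) := by
    have cross : ∀ {A B : Set (Ωc × Ωc)}, Disjoint A B → ∀ {x y : Ωc × Ωc},
        x ∈ B → y ∈ B → ((x ∈ A) ↔ (y ∈ A)) := by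
      intro A B hAB x y hx hy
      exact iff_of_false (fun h => Set.disjoint_left.mp hAB h hx)
        (fun h => Set.disjoint_left.mp hAB h hy)
    intro c hc f hf x y hx hy
    simp only [Set.mem_insert_iff, Set.mem_singleton_iff] at hc hf
    rcases hc with rfl | rfl | rfl | rfl <;> rcases hf with rfl | rfl | rfl | rfl
    · exact iff_of_true hx hy
    · exact cross dDS hx hy
    · exact cross dDR hx hy
    · exact cross dDT hx hy
    · exact cross dDS.symm hx hy
    · exact iff_of_true hx hy
    · exact cross dSR hx hy
    · exact cross dST hx hy
    · exact cross dDR.symm hx hy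
    · exact cross dSR.symm hx hy
    · exact iff_of_true hx hy
    · exact cross dRT hx hy
    · exact cross dDT.symm hx hy
    · exact cross dST.symm hx hy
    · exact cross dRT.symm hx hy
    · exact iff_of_true hx hy
  -- base cardinality facts over V
  have cardW : Nat.card (Fin d → ZMod 3) = 3 ^ d := cardV
  have bNE : ∀ u : Fin d → ZMod 3,
      Nat.card {w : Fin d → ZMod 3 // w ≠ u} = 3 ^ d - 1 := by
    intro u; rw [card_ne_pt u, cardW]
  have bNE2 : ∀ u v : Fin d → ZMod 3, u ≠ v →
      Nat.card {w : Fin d → ZMod 3 // w ≠ u ∧ w ≠ v} = 3 ^ d - 2 := by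
    intro u v huv
    have hs := card_split (fun w : Fin d → ZMod 3 => w ≠ u) (fun w => w = v)
    have h1 : Nat.card {w : Fin d → ZMod 3 // w ≠ u ∧ w = v} = 1 := by
      rw [card_of_iff (q := fun w : Fin d → ZMod 3 => w = v)
        (fun w => ⟨fun h => h.2, fun h => ⟨by rw [h]; exact huv.symm, h⟩⟩), card_eq_pt]
    have h2 : Nat.card {w : Fin d → ZMod 3 // w ≠ u ∧ ¬ w = v} =
        Nat.card {w : Fin d → ZMod 3 // w ≠ u ∧ w ≠ v} := card_of_iff (fun w => Iff.rfl)
    rw [bNE u, h1, h2] at hs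
    omega
  have bF : ∀ k : Fin (r + 1), k ≠ 0 → ∀ a,
      Nat.card {w : Fin d → ZMod 3 // π k w = a} = 3 ^ d / 3 :=
    fun k hk a => fib1 π hπsurj hk a
  have bFne : ∀ k : Fin (r + 1), k ≠ 0 → ∀ a,
      Nat.card {w : Fin d → ZMod 3 // π k w ≠ a} = 3 ^ d - 3 ^ d / 3 := by
    intro k hk a
    rw [card_of_iff (q := fun w : Fin d → ZMod 3 => ¬ (π k w = a)) (fun w => Iff.rfl),
      card_not (fun w : Fin d → ZMod 3 => π k w = a), cardW, bF k hk a]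
  have bFF : ∀ k l : Fin (r + 1), k ≠ 0 → l ≠ 0 → k ≠ l → ∀ a b,
      Nat.card {w : Fin d → ZMod 3 // π k w = a ∧ π l w = b} = 3 ^ d / 9 :=
    fun k l hk hl hkl a b => fib2 π hπsurj hπker hk hl hkl a b
  have bFFne : ∀ k l : Fin (r + 1), k ≠ 0 → l ≠ 0 → k ≠ l → ∀ a b,
      Nat.card {w : Fin d → ZMod 3 // π k w = a ∧ π l w ≠ b} =
        3 ^ d / 3 - 3 ^ d / 9 := by
    intro k l hk hl hkl a b
    have hs := card_split (fun w : Fin d → ZMod 3 => π k w = a) (fun w => π l w = b)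
    rw [bF k hk a, bFF k l hk hl hkl a b] at hs
    have h2 : Nat.card {w : Fin d → ZMod 3 // π k w = a ∧ ¬ π l w = b} =
        Nat.card {w : Fin d → ZMod 3 // π k w = a ∧ π l w ≠ b} :=
      card_of_iff (fun w => Iff.rfl)
    omega
  have bFneFne : ∀ k l : Fin (r + 1), k ≠ 0 → l ≠ 0 → k ≠ l → ∀ a b,
      Nat.card {w : Fin d → ZMod 3 // π k w ≠ a ∧ π l w ≠ b} =
        3 ^ d - 3 ^ d / 3 - (3 ^ d / 3 - 3 ^ d / 9) := by
    intro k l hk hl hkl a b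
    have hs := card_split (fun w : Fin d → ZMod 3 => π k w ≠ a) (fun w => π l w = b)
    have h1 : Nat.card {w : Fin d → ZMod 3 // π k w ≠ a ∧ π l w = b} =
        3 ^ d / 3 - 3 ^ d / 9 := by
      rw [card_of_iff (q := fun w : Fin d → ZMod 3 => π l w = b ∧ π k w ≠ a)
        (fun w => and_comm), bFFne l k hl hk hkl.symm b a]
    have h2 : Nat.card {w : Fin d → ZMod 3 // π k w ≠ a ∧ ¬ π l w = b} =
        Nat.card {w : Fin d → ZMod 3 // π k w ≠ a ∧ π l w ≠ b} :=
      card_of_iff (fun w => Iff.rfl)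
    rw [bFne k hk a, h1, h2] at hs
    omega
  have bSame0 : ∀ (k : Fin (r + 1)) (a b : ZMod 3), a ≠ b →
      Nat.card {w : Fin d → ZMod 3 // π k w = a ∧ π k w = b} = 0 := by
    intro k a b hab
    exact card_false (fun w hw => hab (hw.1 ▸ hw.2 ▸ rfl))
  have bSameNe : ∀ k : Fin (r + 1), k ≠ 0 → ∀ a b : ZMod 3, a ≠ b →
      Nat.card {w : Fin d → ZMod 3 // π k w ≠ a ∧ π k w ≠ b} =
        3 ^ d - 3 ^ d / 3 - 3 ^ d / 3 := by
    intro k hk a b hab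
    have hs := card_split (fun w : Fin d → ZMod 3 => π k w ≠ a) (fun w => π k w = b)
    have h1 : Nat.card {w : Fin d → ZMod 3 // π k w ≠ a ∧ π k w = b} = 3 ^ d / 3 := by
      rw [card_of_iff (q := fun w : Fin d → ZMod 3 => π k w = b)
        (fun w => ⟨fun h => h.2, fun h => ⟨by rw [h]; exact (Ne.symm hab), h⟩⟩), bF k hk b]
    have h2 : Nat.card {w : Fin d → ZMod 3 // π k w ≠ a ∧ ¬ π k w = b} =
        Nat.card {w : Fin d → ZMod 3 // π k w ≠ a ∧ π k w ≠ b} :=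
      card_of_iff (fun w => Iff.rfl)
    rw [bFne k hk a, h1, h2] at hs
    omega
  have bFpt : ∀ k : Fin (r + 1), k ≠ 0 → ∀ (a : ZMod 3) (u : Fin d → ZMod 3), π k u = a →
      Nat.card {w : Fin d → ZMod 3 // π k w = a ∧ w ≠ u} = 3 ^ d / 3 - 1 := by
    intro k hk a u hu
    have hs := card_split (fun w : Fin d → ZMod 3 => π k w = a) (fun w => w = u)
    have h1 : Nat.card {w : Fin d → ZMod 3 // π k w = a ∧ w = u} = 1 := by
      rw [card_of_iff (q := fun w : Fin d → ZMod 3 => w = u)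
        (fun w => ⟨fun h => h.2, fun h => ⟨by rw [h]; exact hu, h⟩⟩), card_eq_pt]
    have h2 : Nat.card {w : Fin d → ZMod 3 // π k w = a ∧ ¬ w = u} =
        Nat.card {w : Fin d → ZMod 3 // π k w = a ∧ w ≠ u} :=
      card_of_iff (fun w => Iff.rfl)
    rw [bF k hk a, h1, h2] at hs
    have h3q : 3 ^ d / 3 ≥ 1 := by omega
    omega
  have bFpt' : ∀ k : Fin (r + 1), k ≠ 0 → ∀ (a : ZMod 3) (u : Fin d → ZMod 3), π k u ≠ a →
      Nat.card {w : Fin d → ZMod 3 // π k w = a ∧ w ≠ u} = 3 ^ d / 3 := by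
    intro k hk a u hu
    rw [card_of_iff (q := fun w : Fin d → ZMod 3 => π k w = a)
      (fun w => ⟨fun h => h.1, fun h => ⟨h, fun e => hu (e ▸ h)⟩⟩), bF k hk a]
  have bFnept : ∀ k : Fin (r + 1), k ≠ 0 → ∀ (a : ZMod 3) (u : Fin d → ZMod 3), π k u = a →
      Nat.card {w : Fin d → ZMod 3 // π k w ≠ a ∧ w ≠ u} = 3 ^ d - 3 ^ d / 3 := by
    intro k hk a u hu
    rw [card_of_iff (q := fun w : Fin d → ZMod 3 => π k w ≠ a)
      (fun w => ⟨fun h => h.1, fun h => ⟨h, fun e => h (e ▸ hu)⟩⟩), bFne k hk a]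
  have bFnept' : ∀ k : Fin (r + 1), k ≠ 0 → ∀ (a : ZMod 3) (u : Fin d → ZMod 3),
      π k u ≠ a →
      Nat.card {w : Fin d → ZMod 3 // π k w ≠ a ∧ w ≠ u} = 3 ^ d - 3 ^ d / 3 - 1 := by
    intro k hk a u hu
    have hs := card_split (fun w : Fin d → ZMod 3 => π k w ≠ a) (fun w => w = u)
    have h1 : Nat.card {w : Fin d → ZMod 3 // π k w ≠ a ∧ w = u} = 1 := by
      rw [card_of_iff (q := fun w : Fin d → ZMod 3 => w = u)
        (fun w => ⟨fun h => h.2, fun h => ⟨by rw [h]; exact hu, h⟩⟩), card_eq_pt]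
    have h2 : Nat.card {w : Fin d → ZMod 3 // π k w ≠ a ∧ ¬ w = u} =
        Nat.card {w : Fin d → ZMod 3 // π k w ≠ a ∧ w ≠ u} :=
      card_of_iff (fun w => Iff.rfl)
    rw [bFne k hk a, h1, h2] at hs
    omega
  have symmem : ∀ (f : Set (Ωc × Ωc)), transposeRel f = f → ∀ x : Ωc × Ωc,
      x ∈ f → (x.2, x.1) ∈ f := by
    intro f hft x hx
    rw [← hft]
    exact hx
  have cnt_eq : ∀ (i : Fin (r + 1)) (x : Fin d → ZMod 3), x ≠ 0 →
      ((Finset.univ.erase i).filter (fun m => π (dia i m) x = 0)).card =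
        (3 ^ d / 3 - 1) / 2 := by
    intro i x hx
    exact (count_dia dia hdia0 hdiabij i (fun k => π k x = 0)).trans
      (hyperplane_count π hd hr hπsurj hπker hx)
  -- value lemmas (S, ·)
  have vSS_D : ∀ α β : Ωc, α = β → cnum S S α β = 3 ^ d - 1 := by
    intro α β h
    subst h
    have hA : Nat.card {w : Fin d → ZMod 3 //
        (α, (w, α.2)) ∈ S ∧ ((w, α.2), α) ∈ S} = 3 ^ d - 1 := by
      have hiff : ∀ w : Fin d → ZMod 3,
          ((α, (w, α.2)) ∈ S ∧ ((w, α.2), α) ∈ S) ↔ w ≠ α.1 := by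
        intro w
        constructor
        · intro hh; exact Ne.symm ((memS _).mp hh.1).2
        · intro hw; exact ⟨(memS _).mpr ⟨rfl, Ne.symm hw⟩, (memS _).mpr ⟨rfl, hw⟩⟩
      rw [card_of_iff hiff, bNE α.1]
    have hC : ∀ m, m ≠ α.2 → Nat.card {w : Fin d → ZMod 3 //
        (α, (w, m)) ∈ S ∧ ((w, m), α) ∈ S} = 0 := by
      intro m hm
      exact card_false (fun w hw => hm (((memS _).mp hw.1).1).symm)
    rw [cnum_sum, sum_one (g := fun m => Nat.card {w : Fin d → ZMod 3 //
      (α, (w, m)) ∈ S ∧ ((w, m), α) ∈ S}) α.2 hA hC]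
    omega
  have vSS_S : ∀ α β : Ωc, α.2 = β.2 → α.1 ≠ β.1 → cnum S S α β = 3 ^ d - 2 := by
    intro α β hfib hne
    have hA : Nat.card {w : Fin d → ZMod 3 //
        (α, (w, α.2)) ∈ S ∧ ((w, α.2), β) ∈ S} = 3 ^ d - 2 := by
      have hiff : ∀ w : Fin d → ZMod 3,
          ((α, (w, α.2)) ∈ S ∧ ((w, α.2), β) ∈ S) ↔ (w ≠ α.1 ∧ w ≠ β.1) := by
        intro w
        constructor
        · intro hh; exact ⟨Ne.symm ((memS _).mp hh.1).2, ((memS _).mp hh.2).2⟩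
        · intro hw; exact ⟨(memS _).mpr ⟨rfl, Ne.symm hw.1⟩, (memS _).mpr ⟨hfib, hw.2⟩⟩
      rw [card_of_iff hiff, bNE2 α.1 β.1 hne]
    have hC : ∀ m, m ≠ α.2 → Nat.card {w : Fin d → ZMod 3 //
        (α, (w, m)) ∈ S ∧ ((w, m), β) ∈ S} = 0 := by
      intro m hm
      exact card_false (fun w hw => hm (((memS _).mp hw.1).1).symm)
    rw [cnum_sum, sum_one (g := fun m => Nat.card {w : Fin d → ZMod 3 //
      (α, (w, m)) ∈ S ∧ ((w, m), β) ∈ S}) α.2 hA hC]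
    omega
  have vSS_ne : ∀ α β : Ωc, α.2 ≠ β.2 → cnum S S α β = 0 := by
    intro α β h
    rw [cnum_sum]
    exact Finset.sum_eq_zero (fun m _ => card_false (fun w hw =>
      h ((((memS _).mp hw.1).1).trans (((memS _).mp hw.2).1))))
  have vSR_eqfib : ∀ α β : Ωc, α.2 = β.2 → cnum S R α β = 0 := by
    intro α β h
    rw [cnum_sum]
    exact Finset.sum_eq_zero (fun m _ => card_false (fun w hw =>
      (((memR _).mp hw.2).1) (((((memS _).mp hw.1).1).symm).trans h)))
  have vSR_R : ∀ α β : Ωc, α.2 ≠ β.2 →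
      σ α.2 β.2 (π (dia α.2 β.2) α.1) = π (dia β.2 α.2) β.1 →
      cnum S R α β = 3 ^ d / 3 - 1 := by
    intro α β hne hcond
    have hu : π (dia α.2 β.2) α.1 = σ β.2 α.2 (π (dia β.2 α.2) β.1) :=
      (hσ' hne _ _).mp hcond
    have hA : Nat.card {w : Fin d → ZMod 3 //
        (α, (w, α.2)) ∈ S ∧ ((w, α.2), β) ∈ R} = 3 ^ d / 3 - 1 := by
      have hiff : ∀ w : Fin d → ZMod 3,
          ((α, (w, α.2)) ∈ S ∧ ((w, α.2), β) ∈ R) ↔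
            (π (dia α.2 β.2) w = σ β.2 α.2 (π (dia β.2 α.2) β.1) ∧ w ≠ α.1) := by
        intro w
        constructor
        · intro hh
          exact ⟨(hσ' hne _ _).mp ((memR _).mp hh.2).2, Ne.symm ((memS _).mp hh.1).2⟩
        · intro hw
          exact ⟨(memS _).mpr ⟨rfl, Ne.symm hw.2⟩,
            (memR _).mpr ⟨hne, (hσ' hne _ _).mpr hw.1⟩⟩
      rw [card_of_iff hiff, bFpt (dia α.2 β.2) (hdiane _ _ hne) _ α.1 hu]
    have hC : ∀ m, m ≠ α.2 → Nat.card {w : Fin d → ZMod 3 //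
        (α, (w, m)) ∈ S ∧ ((w, m), β) ∈ R} = 0 := by
      intro m hm
      exact card_false (fun w hw => hm (((memS _).mp hw.1).1).symm)
    rw [cnum_sum, sum_one (g := fun m => Nat.card {w : Fin d → ZMod 3 //
      (α, (w, m)) ∈ S ∧ ((w, m), β) ∈ R}) α.2 hA hC]
    omega
  have vSR_T : ∀ α β : Ωc, α.2 ≠ β.2 →
      σ α.2 β.2 (π (dia α.2 β.2) α.1) ≠ π (dia β.2 α.2) β.1 →
      cnum S R α β = 3 ^ d / 3 := by
    intro α β hne hcond
    have hu : π (dia α.2 β.2) α.1 ≠ σ β.2 α.2 (π (dia β.2 α.2) β.1) :=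
      fun e => hcond ((hσ' hne _ _).mpr e)
    have hA : Nat.card {w : Fin d → ZMod 3 //
        (α, (w, α.2)) ∈ S ∧ ((w, α.2), β) ∈ R} = 3 ^ d / 3 := by
      have hiff : ∀ w : Fin d → ZMod 3,
          ((α, (w, α.2)) ∈ S ∧ ((w, α.2), β) ∈ R) ↔
            (π (dia α.2 β.2) w = σ β.2 α.2 (π (dia β.2 α.2) β.1) ∧ w ≠ α.1) := by
        intro w
        constructor
        · intro hh
          exact ⟨(hσ' hne _ _).mp ((memR _).mp hh.2).2, Ne.symm ((memS _).mp hh.1).2⟩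
        · intro hw
          exact ⟨(memS _).mpr ⟨rfl, Ne.symm hw.2⟩,
            (memR _).mpr ⟨hne, (hσ' hne _ _).mpr hw.1⟩⟩
      rw [card_of_iff hiff, bFpt' (dia α.2 β.2) (hdiane _ _ hne) _ α.1 hu]
    have hC : ∀ m, m ≠ α.2 → Nat.card {w : Fin d → ZMod 3 //
        (α, (w, m)) ∈ S ∧ ((w, m), β) ∈ R} = 0 := by
      intro m hm
      exact card_false (fun w hw => hm (((memS _).mp hw.1).1).symm)
    rw [cnum_sum, sum_one (g := fun m => Nat.card {w : Fin d → ZMod 3 //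
      (α, (w, m)) ∈ S ∧ ((w, m), β) ∈ R}) α.2 hA hC]
    omega
  have vST_eqfib : ∀ α β : Ωc, α.2 = β.2 → cnum S T α β = 0 := by
    intro α β h
    rw [cnum_sum]
    exact Finset.sum_eq_zero (fun m _ => card_false (fun w hw =>
      (((memT _).mp hw.2).1) (((((memS _).mp hw.1).1).symm).trans h)))
  have vST_R : ∀ α β : Ωc, α.2 ≠ β.2 →
      σ α.2 β.2 (π (dia α.2 β.2) α.1) = π (dia β.2 α.2) β.1 →
      cnum S T α β = 3 ^ d - 3 ^ d / 3 := by
    intro α β hne hcond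
    have hu : π (dia α.2 β.2) α.1 = σ β.2 α.2 (π (dia β.2 α.2) β.1) :=
      (hσ' hne _ _).mp hcond
    have hA : Nat.card {w : Fin d → ZMod 3 //
        (α, (w, α.2)) ∈ S ∧ ((w, α.2), β) ∈ T} = 3 ^ d - 3 ^ d / 3 := by
      have hiff : ∀ w : Fin d → ZMod 3,
          ((α, (w, α.2)) ∈ S ∧ ((w, α.2), β) ∈ T) ↔
            (π (dia α.2 β.2) w ≠ σ β.2 α.2 (π (dia β.2 α.2) β.1) ∧ w ≠ α.1) := by
        intro w
        constructor
        · intro hh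
          refine ⟨fun e => ((memT _).mp hh.2).2 ((hσ' hne _ _).mpr e),
            Ne.symm ((memS _).mp hh.1).2⟩
        · intro hw
          exact ⟨(memS _).mpr ⟨rfl, Ne.symm hw.2⟩,
            (memT _).mpr ⟨hne, fun e => hw.1 ((hσ' hne _ _).mp e)⟩⟩
      rw [card_of_iff hiff, bFnept (dia α.2 β.2) (hdiane _ _ hne) _ α.1 hu]
    have hC : ∀ m, m ≠ α.2 → Nat.card {w : Fin d → ZMod 3 //
        (α, (w, m)) ∈ S ∧ ((w, m), β) ∈ T} = 0 := by
      intro m hm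
      exact card_false (fun w hw => hm (((memS _).mp hw.1).1).symm)
    rw [cnum_sum, sum_one (g := fun m => Nat.card {w : Fin d → ZMod 3 //
      (α, (w, m)) ∈ S ∧ ((w, m), β) ∈ T}) α.2 hA hC]
    omega
  have vST_T : ∀ α β : Ωc, α.2 ≠ β.2 →
      σ α.2 β.2 (π (dia α.2 β.2) α.1) ≠ π (dia β.2 α.2) β.1 →
      cnum S T α β = 3 ^ d - 3 ^ d / 3 - 1 := by
    intro α β hne hcond
    have hu : π (dia α.2 β.2) α.1 ≠ σ β.2 α.2 (π (dia β.2 α.2) β.1) :=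
      fun e => hcond ((hσ' hne _ _).mpr e)
    have hA : Nat.card {w : Fin d → ZMod 3 //
        (α, (w, α.2)) ∈ S ∧ ((w, α.2), β) ∈ T} = 3 ^ d - 3 ^ d / 3 - 1 := by
      have hiff : ∀ w : Fin d → ZMod 3,
          ((α, (w, α.2)) ∈ S ∧ ((w, α.2), β) ∈ T) ↔
            (π (dia α.2 β.2) w ≠ σ β.2 α.2 (π (dia β.2 α.2) β.1) ∧ w ≠ α.1) := by
        intro w
        constructor
        · intro hh
          refine ⟨fun e => ((memT _).mp hh.2).2 ((hσ' hne _ _).mpr e),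
            Ne.symm ((memS _).mp hh.1).2⟩
        · intro hw
          exact ⟨(memS _).mpr ⟨rfl, Ne.symm hw.2⟩,
            (memT _).mpr ⟨hne, fun e => hw.1 ((hσ' hne _ _).mp e)⟩⟩
      rw [card_of_iff hiff, bFnept' (dia α.2 β.2) (hdiane _ _ hne) _ α.1 hu]
    have hC : ∀ m, m ≠ α.2 → Nat.card {w : Fin d → ZMod 3 //
        (α, (w, m)) ∈ S ∧ ((w, m), β) ∈ T} = 0 := by
      intro m hm
      exact card_false (fun w hw => hm (((memS _).mp hw.1).1).symm)
    rw [cnum_sum, sum_one (g := fun m => Nat.card {w : Fin d → ZMod 3 //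
      (α, (w, m)) ∈ S ∧ ((w, m), β) ∈ T}) α.2 hA hC]
    omega
  have vRR_D : ∀ α β : Ωc, α = β → cnum R R α β = r * (3 ^ d / 3) := by
    intro α β h
    subst h
    have hA : Nat.card {w : Fin d → ZMod 3 //
        (α, (w, α.2)) ∈ R ∧ ((w, α.2), α) ∈ R} = 0 :=
      card_false (fun w hw => (((memR _).mp hw.1).1) rfl)
    have hC : ∀ m, m ≠ α.2 → Nat.card {w : Fin d → ZMod 3 //
        (α, (w, m)) ∈ R ∧ ((w, m), α) ∈ R} = 3 ^ d / 3 := by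
      intro m hm
      have hiff : ∀ w : Fin d → ZMod 3,
          ((α, (w, m)) ∈ R ∧ ((w, m), α) ∈ R) ↔
            π (dia m α.2) w = σ α.2 m (π (dia α.2 m) α.1) := by
        intro w
        constructor
        · intro hh; exact (((memR _).mp hh.1).2).symm
        · intro hw
          exact ⟨(memR _).mpr ⟨Ne.symm hm, hw.symm⟩,
            (memR _).mpr ⟨hm, (hσ' hm _ _).mpr hw⟩⟩
      rw [card_of_iff hiff, bF (dia m α.2) (hdiane m α.2 hm) _]
    rw [cnum_sum, sum_one (g := fun m => Nat.card {w : Fin d → ZMod 3 //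
      (α, (w, m)) ∈ R ∧ ((w, m), α) ∈ R}) α.2 hA hC]
    simp
  have vRR_S : ∀ α β : Ωc, α.2 = β.2 → α.1 ≠ β.1 →
      cnum R R α β = (3 ^ d / 3 - 1) / 2 * (3 ^ d / 3) := by
    intro α β hfib hne
    obtain ⟨u, i⟩ := α
    obtain ⟨v, j⟩ := β
    have hj : i = j := hfib
    subst hj
    have hx : u - v ≠ 0 := sub_ne_zero_of_ne hne
    have hA : Nat.card {w : Fin d → ZMod 3 //
        ((u, i), (w, i)) ∈ R ∧ ((w, i), (v, i)) ∈ R} = 0 :=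
      card_false (fun w hw => (((memR _).mp hw.1).1) rfl)
    have hC : ∀ m, m ≠ i → Nat.card {w : Fin d → ZMod 3 //
        ((u, i), (w, m)) ∈ R ∧ ((w, m), (v, i)) ∈ R} =
        if π (dia i m) (u - v) = 0 then 3 ^ d / 3 else 0 := by
      intro m hm
      by_cases hp : π (dia i m) (u - v) = 0
      · rw [if_pos hp]
        have hab : σ i m (π (dia i m) u) = σ i m (π (dia i m) v) := by
          have h1 : π (dia i m) u = π (dia i m) v := by
            have h2 : π (dia i m) u - π (dia i m) v = 0 := by rw [← _root_.map_sub]; exact hp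
            exact sub_eq_zero.mp h2
          rw [h1]
        have hiff : ∀ w : Fin d → ZMod 3,
            (((u, i), (w, m)) ∈ R ∧ ((w, m), (v, i)) ∈ R) ↔
              π (dia m i) w = σ i m (π (dia i m) u) := by
          intro w
          constructor
          · intro hh; exact (((memR _).mp hh.1).2).symm
          · intro hw
            exact ⟨(memR _).mpr ⟨Ne.symm hm, hw.symm⟩,
              (memR _).mpr ⟨hm, (hσ' hm _ _).mpr (hw.trans hab)⟩⟩
        rw [card_of_iff hiff, bF (dia m i) (hdiane m i hm) _]
      · rw [if_neg hp]
        have hab : σ i m (π (dia i m) u) ≠ σ i m (π (dia i m) v) := by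
          intro e
          apply hp
          rw [_root_.map_sub, (Equiv.injective (σ i m)) e, sub_self]
        apply card_false
        intro w hw
        apply hab
        have h1 : π (dia m i) w = σ i m (π (dia i m) u) := (((memR _).mp hw.1).2).symm
        have h2 : π (dia m i) w = σ i m (π (dia i m) v) :=
          (hσ' hm _ _).mp ((memR _).mp hw.2).2
        exact h1.symm.trans h2
    rw [cnum_sum, sum_ite_split (g := fun m => Nat.card {w : Fin d → ZMod 3 //
      ((u, i), (w, m)) ∈ R ∧ ((w, m), (v, i)) ∈ R}) i
      (fun m => π (dia i m) (u - v) = 0) hA hC, cnt_eq i (u - v) hx]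
    simp
  have vRR_ne : ∀ α β : Ωc, α.2 ≠ β.2 → cnum R R α β = (r - 1) * (3 ^ d / 9) := by
    intro α β hne
    obtain ⟨u, i⟩ := α
    obtain ⟨v, j⟩ := β
    have hA : Nat.card {w : Fin d → ZMod 3 //
        ((u, i), (w, i)) ∈ R ∧ ((w, i), (v, j)) ∈ R} = 0 :=
      card_false (fun w hw => (((memR _).mp hw.1).1) rfl)
    have hB : Nat.card {w : Fin d → ZMod 3 //
        ((u, i), (w, j)) ∈ R ∧ ((w, j), (v, j)) ∈ R} = 0 :=
      card_false (fun w hw => (((memR _).mp hw.2).1) rfl)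
    have hC : ∀ m, m ≠ i → m ≠ j → Nat.card {w : Fin d → ZMod 3 //
        ((u, i), (w, m)) ∈ R ∧ ((w, m), (v, j)) ∈ R} = 3 ^ d / 9 := by
      intro m hm1 hm2
      have hiff : ∀ w : Fin d → ZMod 3,
          (((u, i), (w, m)) ∈ R ∧ ((w, m), (v, j)) ∈ R) ↔
            (π (dia m i) w = σ i m (π (dia i m) u) ∧
             π (dia m j) w = σ j m (π (dia j m) v)) := by
        intro w
        constructor
        · intro hh
          exact ⟨(((memR _).mp hh.1).2).symm, (hσ' hm2 _ _).mp ((memR _).mp hh.2).2⟩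
        · intro hw
          exact ⟨(memR _).mpr ⟨Ne.symm hm1, hw.1.symm⟩,
            (memR _).mpr ⟨hm2, (hσ' hm2 _ _).mpr hw.2⟩⟩
      rw [card_of_iff hiff, bFF (dia m i) (dia m j) (hdiane m i hm1) (hdiane m j hm2)
        (fun e => hne ((hdiabij m).1 e)) _ _]
    rw [cnum_sum, sum_two (g := fun m => Nat.card {w : Fin d → ZMod 3 //
      ((u, i), (w, m)) ∈ R ∧ ((w, m), (v, j)) ∈ R}) i j (Ne.symm hne) hA hB hC]
    simp
  have vRT_D : ∀ α β : Ωc, α = β → cnum R T α β = 0 := by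
    intro α β h
    subst h
    rw [cnum_sum]
    refine Finset.sum_eq_zero (fun m _ => card_false (fun w hw => ?_))
    have h1 := (memR _).mp hw.1
    have h2 := (memT _).mp hw.2
    exact h2.2 ((hσ' h2.1 _ _).mpr h1.2.symm)
  have vRT_S : ∀ α β : Ωc, α.2 = β.2 → α.1 ≠ β.1 →
      cnum R T α β = (r - (3 ^ d / 3 - 1) / 2) * (3 ^ d / 3) := by
    intro α β hfib hne
    obtain ⟨u, i⟩ := α
    obtain ⟨v, j⟩ := β
    have hj : i = j := hfib
    subst hj
    have hx : u - v ≠ 0 := sub_ne_zero_of_ne hne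
    have hA : Nat.card {w : Fin d → ZMod 3 //
        ((u, i), (w, i)) ∈ R ∧ ((w, i), (v, i)) ∈ T} = 0 :=
      card_false (fun w hw => (((memR _).mp hw.1).1) rfl)
    have hC : ∀ m, m ≠ i → Nat.card {w : Fin d → ZMod 3 //
        ((u, i), (w, m)) ∈ R ∧ ((w, m), (v, i)) ∈ T} =
        if π (dia i m) (u - v) = 0 then 0 else 3 ^ d / 3 := by
      intro m hm
      by_cases hp : π (dia i m) (u - v) = 0
      · rw [if_pos hp]
        have hab : σ i m (π (dia i m) u) = σ i m (π (dia i m) v) := by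
          have h1 : π (dia i m) u = π (dia i m) v := by
            have h2 : π (dia i m) u - π (dia i m) v = 0 := by rw [← _root_.map_sub]; exact hp
            exact sub_eq_zero.mp h2
          rw [h1]
        apply card_false
        intro w hw
        have h1 : π (dia m i) w = σ i m (π (dia i m) u) := (((memR _).mp hw.1).2).symm
        exact ((memT _).mp hw.2).2 ((hσ' hm _ _).mpr (h1.trans hab))
      · rw [if_neg hp]
        have hab : σ i m (π (dia i m) u) ≠ σ i m (π (dia i m) v) := by
          intro e
          apply hp
          rw [_root_.map_sub, (Equiv.injective (σ i m)) e, sub_self]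
        have hiff : ∀ w : Fin d → ZMod 3,
            (((u, i), (w, m)) ∈ R ∧ ((w, m), (v, i)) ∈ T) ↔
              π (dia m i) w = σ i m (π (dia i m) u) := by
          intro w
          constructor
          · intro hh; exact (((memR _).mp hh.1).2).symm
          · intro hw
            exact ⟨(memR _).mpr ⟨Ne.symm hm, hw.symm⟩,
              (memT _).mpr ⟨hm, fun e => hab (hw.symm.trans ((hσ' hm _ _).mp e))⟩⟩
        rw [card_of_iff hiff, bF (dia m i) (hdiane m i hm) _]
    rw [cnum_sum, sum_ite_split (g := fun m => Nat.card {w : Fin d → ZMod 3 //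
      ((u, i), (w, m)) ∈ R ∧ ((w, m), (v, i)) ∈ T}) i
      (fun m => π (dia i m) (u - v) = 0) hA hC, cnt_eq i (u - v) hx]
    simp
  have vRT_ne : ∀ α β : Ωc, α.2 ≠ β.2 →
      cnum R T α β = (r - 1) * (3 ^ d / 3 - 3 ^ d / 9) := by
    intro α β hne
    obtain ⟨u, i⟩ := α
    obtain ⟨v, j⟩ := β
    have hA : Nat.card {w : Fin d → ZMod 3 //
        ((u, i), (w, i)) ∈ R ∧ ((w, i), (v, j)) ∈ T} = 0 :=
      card_false (fun w hw => (((memR _).mp hw.1).1) rfl)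
    have hB : Nat.card {w : Fin d → ZMod 3 //
        ((u, i), (w, j)) ∈ R ∧ ((w, j), (v, j)) ∈ T} = 0 :=
      card_false (fun w hw => (((memT _).mp hw.2).1) rfl)
    have hC : ∀ m, m ≠ i → m ≠ j → Nat.card {w : Fin d → ZMod 3 //
        ((u, i), (w, m)) ∈ R ∧ ((w, m), (v, j)) ∈ T} = 3 ^ d / 3 - 3 ^ d / 9 := by
      intro m hm1 hm2
      have hiff : ∀ w : Fin d → ZMod 3,
          (((u, i), (w, m)) ∈ R ∧ ((w, m), (v, j)) ∈ T) ↔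
            (π (dia m i) w = σ i m (π (dia i m) u) ∧
             π (dia m j) w ≠ σ j m (π (dia j m) v)) := by
        intro w
        constructor
        · intro hh
          exact ⟨(((memR _).mp hh.1).2).symm,
            fun e => ((memT _).mp hh.2).2 ((hσ' hm2 _ _).mpr e)⟩
        · intro hw
          exact ⟨(memR _).mpr ⟨Ne.symm hm1, hw.1.symm⟩,
            (memT _).mpr ⟨hm2, fun e => hw.2 ((hσ' hm2 _ _).mp e)⟩⟩
      rw [card_of_iff hiff, bFFne (dia m i) (dia m j) (hdiane m i hm1) (hdiane m j hm2)
        (fun e => hne ((hdiabij m).1 e)) _ _]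
    rw [cnum_sum, sum_two (g := fun m => Nat.card {w : Fin d → ZMod 3 //
      ((u, i), (w, m)) ∈ R ∧ ((w, m), (v, j)) ∈ T}) i j (Ne.symm hne) hA hB hC]
    simp
  have vTT_D : ∀ α β : Ωc, α = β → cnum T T α β = r * (3 ^ d - 3 ^ d / 3) := by
    intro α β h
    subst h
    have hA : Nat.card {w : Fin d → ZMod 3 //
        (α, (w, α.2)) ∈ T ∧ ((w, α.2), α) ∈ T} = 0 :=
      card_false (fun w hw => (((memT _).mp hw.1).1) rfl)
    have hC : ∀ m, m ≠ α.2 → Nat.card {w : Fin d → ZMod 3 //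
        (α, (w, m)) ∈ T ∧ ((w, m), α) ∈ T} = 3 ^ d - 3 ^ d / 3 := by
      intro m hm
      have hiff : ∀ w : Fin d → ZMod 3,
          ((α, (w, m)) ∈ T ∧ ((w, m), α) ∈ T) ↔
            π (dia m α.2) w ≠ σ α.2 m (π (dia α.2 m) α.1) := by
        intro w
        constructor
        · intro hh; exact fun e => ((memT _).mp hh.1).2 e.symm
        · intro hw
          exact ⟨(memT _).mpr ⟨Ne.symm hm, fun e => hw e.symm⟩,
            (memT _).mpr ⟨hm, fun e => hw ((hσ' hm _ _).mp e)⟩⟩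
      rw [card_of_iff hiff, bFne (dia m α.2) (hdiane m α.2 hm) _]
    rw [cnum_sum, sum_one (g := fun m => Nat.card {w : Fin d → ZMod 3 //
      (α, (w, m)) ∈ T ∧ ((w, m), α) ∈ T}) α.2 hA hC]
    simp
  have vTT_S : ∀ α β : Ωc, α.2 = β.2 → α.1 ≠ β.1 →
      cnum T T α β = (3 ^ d / 3 - 1) / 2 * (3 ^ d - 3 ^ d / 3) +
        (r - (3 ^ d / 3 - 1) / 2) * (3 ^ d - 3 ^ d / 3 - 3 ^ d / 3) := by
    intro α β hfib hne
    obtain ⟨u, i⟩ := α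
    obtain ⟨v, j⟩ := β
    have hj : i = j := hfib
    subst hj
    have hx : u - v ≠ 0 := sub_ne_zero_of_ne hne
    have hA : Nat.card {w : Fin d → ZMod 3 //
        ((u, i), (w, i)) ∈ T ∧ ((w, i), (v, i)) ∈ T} = 0 :=
      card_false (fun w hw => (((memT _).mp hw.1).1) rfl)
    have hC : ∀ m, m ≠ i → Nat.card {w : Fin d → ZMod 3 //
        ((u, i), (w, m)) ∈ T ∧ ((w, m), (v, i)) ∈ T} =
        if π (dia i m) (u - v) = 0 then 3 ^ d - 3 ^ d / 3
        else 3 ^ d - 3 ^ d / 3 - 3 ^ d / 3 := by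
      intro m hm
      by_cases hp : π (dia i m) (u - v) = 0
      · rw [if_pos hp]
        have hab : σ i m (π (dia i m) u) = σ i m (π (dia i m) v) := by
          have h1 : π (dia i m) u = π (dia i m) v := by
            have h2 : π (dia i m) u - π (dia i m) v = 0 := by rw [← _root_.map_sub]; exact hp
            exact sub_eq_zero.mp h2
          rw [h1]
        have hiff : ∀ w : Fin d → ZMod 3,
            (((u, i), (w, m)) ∈ T ∧ ((w, m), (v, i)) ∈ T) ↔
              π (dia m i) w ≠ σ i m (π (dia i m) u) := by
          intro w
          constructor
          · intro hh; exact fun e => ((memT _).mp hh.1).2 e.symm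
          · intro hw
            exact ⟨(memT _).mpr ⟨Ne.symm hm, fun e => hw e.symm⟩,
              (memT _).mpr ⟨hm, fun e =>
                hw (((hσ' hm _ _).mp e).trans hab.symm)⟩⟩
        rw [card_of_iff hiff, bFne (dia m i) (hdiane m i hm) _]
      · rw [if_neg hp]
        have hab : σ i m (π (dia i m) u) ≠ σ i m (π (dia i m) v) := by
          intro e
          apply hp
          rw [_root_.map_sub, (Equiv.injective (σ i m)) e, sub_self]
        have hiff : ∀ w : Fin d → ZMod 3,
            (((u, i), (w, m)) ∈ T ∧ ((w, m), (v, i)) ∈ T) ↔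
              (π (dia m i) w ≠ σ i m (π (dia i m) u) ∧
               π (dia m i) w ≠ σ i m (π (dia i m) v)) := by
          intro w
          constructor
          · intro hh
            exact ⟨fun e => ((memT _).mp hh.1).2 e.symm,
              fun e => ((memT _).mp hh.2).2 ((hσ' hm _ _).mpr e)⟩
          · intro hw
            exact ⟨(memT _).mpr ⟨Ne.symm hm, fun e => hw.1 e.symm⟩,
              (memT _).mpr ⟨hm, fun e => hw.2 ((hσ' hm _ _).mp e)⟩⟩
        rw [card_of_iff hiff, bSameNe (dia m i) (hdiane m i hm) _ _ hab]
    rw [cnum_sum, sum_ite_split (g := fun m => Nat.card {w : Fin d → ZMod 3 //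
      ((u, i), (w, m)) ∈ T ∧ ((w, m), (v, i)) ∈ T}) i
      (fun m => π (dia i m) (u - v) = 0) hA hC, cnt_eq i (u - v) hx]
    rw [zero_add]
  have vTT_ne : ∀ α β : Ωc, α.2 ≠ β.2 →
      cnum T T α β = (r - 1) * (3 ^ d - 3 ^ d / 3 - (3 ^ d / 3 - 3 ^ d / 9)) := by
    intro α β hne
    obtain ⟨u, i⟩ := α
    obtain ⟨v, j⟩ := β
    have hA : Nat.card {w : Fin d → ZMod 3 //
        ((u, i), (w, i)) ∈ T ∧ ((w, i), (v, j)) ∈ T} = 0 :=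
      card_false (fun w hw => (((memT _).mp hw.1).1) rfl)
    have hB : Nat.card {w : Fin d → ZMod 3 //
        ((u, i), (w, j)) ∈ T ∧ ((w, j), (v, j)) ∈ T} = 0 :=
      card_false (fun w hw => (((memT _).mp hw.2).1) rfl)
    have hC : ∀ m, m ≠ i → m ≠ j → Nat.card {w : Fin d → ZMod 3 //
        ((u, i), (w, m)) ∈ T ∧ ((w, m), (v, j)) ∈ T} =
        3 ^ d - 3 ^ d / 3 - (3 ^ d / 3 - 3 ^ d / 9) := by
      intro m hm1 hm2
      have hiff : ∀ w : Fin d → ZMod 3,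
          (((u, i), (w, m)) ∈ T ∧ ((w, m), (v, j)) ∈ T) ↔
            (π (dia m i) w ≠ σ i m (π (dia i m) u) ∧
             π (dia m j) w ≠ σ j m (π (dia j m) v)) := by
        intro w
        constructor
        · intro hh
          exact ⟨fun e => ((memT _).mp hh.1).2 e.symm,
            fun e => ((memT _).mp hh.2).2 ((hσ' hm2 _ _).mpr e)⟩
        · intro hw
          exact ⟨(memT _).mpr ⟨Ne.symm hm1, fun e => hw.1 e.symm⟩,
            (memT _).mpr ⟨hm2, fun e => hw.2 ((hσ' hm2 _ _).mp e)⟩⟩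
      rw [card_of_iff hiff, bFneFne (dia m i) (dia m j) (hdiane m i hm1)
        (hdiane m j hm2) (fun e => hne ((hdiabij m).1 e)) _ _]
    rw [cnum_sum, sum_two (g := fun m => Nat.card {w : Fin d → ZMod 3 //
      ((u, i), (w, m)) ∈ T ∧ ((w, m), (v, j)) ∈ T}) i j (Ne.symm hne) hA hB hC]
    simp
  have coh : IsCoherentCond ({D, S, R, T} : Set (Set (Ωc × Ωc))) := by
    intro c hc e he f hf p hp q hq
    have hc' : c = D ∨ c = S ∨ c = R ∨ c = T := by simpa using hc
    have he' : e = D ∨ e = S ∨ e = R ∨ e = T := by simpa using he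
    have hf' : f = D ∨ f = S ∨ f = R ∨ f = T := by simpa using hf
    have Dcase : ∀ (e' : Set (Ωc × Ωc)), ((p.1, p.2) ∈ e' ↔ (q.1, q.2) ∈ e') →
        (if (p.1, p.2) ∈ e' then 1 else 0) = (if (q.1, q.2) ∈ e' then 1 else 0 : ℕ) := by
      intro e' hiff
      by_cases hmem : (p.1, p.2) ∈ e'
      · rw [if_pos hmem, if_pos (hiff.mp hmem)]
      · rw [if_neg hmem, if_neg (fun hh => hmem (hiff.mpr hh))]
    rcases hc' with rfl | rfl | rfl | rfl
    · rw [cnumD_left, cnumD_left]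
      exact Dcase e (classes_eqmem e he f hf p q hp hq)
    · rcases he' with rfl | rfl | rfl | rfl
      · rw [cnumD_right, cnumD_right]
        exact Dcase S (classes_eqmem S hc f hf p q hp hq)
      · rcases hf' with rfl | rfl | rfl | rfl
        · rw [vSS_D p.1 p.2 ((memD p).mp hp), vSS_D q.1 q.2 ((memD q).mp hq)]
        · rw [vSS_S p.1 p.2 ((memS p).mp hp).1 ((memS p).mp hp).2,
            vSS_S q.1 q.2 ((memS q).mp hq).1 ((memS q).mp hq).2]
        · rw [vSS_ne p.1 p.2 ((memR p).mp hp).1, vSS_ne q.1 q.2 ((memR q).mp hq).1]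
        · rw [vSS_ne p.1 p.2 ((memT p).mp hp).1, vSS_ne q.1 q.2 ((memT q).mp hq).1]
      · rcases hf' with rfl | rfl | rfl | rfl
        · rw [vSR_eqfib p.1 p.2 (congrArg Prod.snd ((memD p).mp hp)),
            vSR_eqfib q.1 q.2 (congrArg Prod.snd ((memD q).mp hq))]
        · rw [vSR_eqfib p.1 p.2 ((memS p).mp hp).1,
            vSR_eqfib q.1 q.2 ((memS q).mp hq).1]
        · rw [vSR_R p.1 p.2 ((memR p).mp hp).1 ((memR p).mp hp).2,
            vSR_R q.1 q.2 ((memR q).mp hq).1 ((memR q).mp hq).2]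
        · rw [vSR_T p.1 p.2 ((memT p).mp hp).1 ((memT p).mp hp).2,
            vSR_T q.1 q.2 ((memT q).mp hq).1 ((memT q).mp hq).2]
      · rcases hf' with rfl | rfl | rfl | rfl
        · rw [vST_eqfib p.1 p.2 (congrArg Prod.snd ((memD p).mp hp)),
            vST_eqfib q.1 q.2 (congrArg Prod.snd ((memD q).mp hq))]
        · rw [vST_eqfib p.1 p.2 ((memS p).mp hp).1,
            vST_eqfib q.1 q.2 ((memS q).mp hq).1]
        · rw [vST_R p.1 p.2 ((memR p).mp hp).1 ((memR p).mp hp).2,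
            vST_R q.1 q.2 ((memR q).mp hq).1 ((memR q).mp hq).2]
        · rw [vST_T p.1 p.2 ((memT p).mp hp).1 ((memT p).mp hp).2,
            vST_T q.1 q.2 ((memT q).mp hq).1 ((memT q).mp hq).2]
    · rcases he' with rfl | rfl | rfl | rfl
      · rw [cnumD_right, cnumD_right]
        exact Dcase R (classes_eqmem R hc f hf p q hp hq)
      · rw [cnum_swap R S tR tS p.1 p.2, cnum_swap R S tR tS q.1 q.2]
        rcases hf' with rfl | rfl | rfl | rfl
        · rw [vSR_eqfib p.2 p.1 (congrArg Prod.snd ((memD p).mp hp)).symm,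
            vSR_eqfib q.2 q.1 (congrArg Prod.snd ((memD q).mp hq)).symm]
        · rw [vSR_eqfib p.2 p.1 ((memS p).mp hp).1.symm,
            vSR_eqfib q.2 q.1 ((memS q).mp hq).1.symm]
        · have hp' := (memR _).mp (symmem R tR p hp)
          have hq' := (memR _).mp (symmem R tR q hq)
          rw [vSR_R p.2 p.1 hp'.1 hp'.2, vSR_R q.2 q.1 hq'.1 hq'.2]
        · have hp' := (memT _).mp (symmem T tT p hp)
          have hq' := (memT _).mp (symmem T tT q hq)
          rw [vSR_T p.2 p.1 hp'.1 hp'.2, vSR_T q.2 q.1 hq'.1 hq'.2]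
      · rcases hf' with rfl | rfl | rfl | rfl
        · rw [vRR_D p.1 p.2 ((memD p).mp hp), vRR_D q.1 q.2 ((memD q).mp hq)]
        · rw [vRR_S p.1 p.2 ((memS p).mp hp).1 ((memS p).mp hp).2,
            vRR_S q.1 q.2 ((memS q).mp hq).1 ((memS q).mp hq).2]
        · rw [vRR_ne p.1 p.2 ((memR p).mp hp).1, vRR_ne q.1 q.2 ((memR q).mp hq).1]
        · rw [vRR_ne p.1 p.2 ((memT p).mp hp).1, vRR_ne q.1 q.2 ((memT q).mp hq).1]
      · rcases hf' with rfl | rfl | rfl | rfl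
        · rw [vRT_D p.1 p.2 ((memD p).mp hp), vRT_D q.1 q.2 ((memD q).mp hq)]
        · rw [vRT_S p.1 p.2 ((memS p).mp hp).1 ((memS p).mp hp).2,
            vRT_S q.1 q.2 ((memS q).mp hq).1 ((memS q).mp hq).2]
        · rw [vRT_ne p.1 p.2 ((memR p).mp hp).1, vRT_ne q.1 q.2 ((memR q).mp hq).1]
        · rw [vRT_ne p.1 p.2 ((memT p).mp hp).1, vRT_ne q.1 q.2 ((memT q).mp hq).1]
    · rcases he' with rfl | rfl | rfl | rfl
      · rw [cnumD_right, cnumD_right]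
        exact Dcase T (classes_eqmem T hc f hf p q hp hq)
      · rw [cnum_swap T S tT tS p.1 p.2, cnum_swap T S tT tS q.1 q.2]
        rcases hf' with rfl | rfl | rfl | rfl
        · rw [vST_eqfib p.2 p.1 (congrArg Prod.snd ((memD p).mp hp)).symm,
            vST_eqfib q.2 q.1 (congrArg Prod.snd ((memD q).mp hq)).symm]
        · rw [vST_eqfib p.2 p.1 ((memS p).mp hp).1.symm,
            vST_eqfib q.2 q.1 ((memS q).mp hq).1.symm]
        · have hp' := (memR _).mp (symmem R tR p hp)
          have hq' := (memR _).mp (symmem R tR q hq)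
          rw [vST_R p.2 p.1 hp'.1 hp'.2, vST_R q.2 q.1 hq'.1 hq'.2]
        · have hp' := (memT _).mp (symmem T tT p hp)
          have hq' := (memT _).mp (symmem T tT q hq)
          rw [vST_T p.2 p.1 hp'.1 hp'.2, vST_T q.2 q.1 hq'.1 hq'.2]
      · rw [cnum_swap T R tT tR p.1 p.2, cnum_swap T R tT tR q.1 q.2]
        rcases hf' with rfl | rfl | rfl | rfl
        · rw [vRT_D p.2 p.1 ((memD p).mp hp).symm, vRT_D q.2 q.1 ((memD q).mp hq).symm]
        · rw [vRT_S p.2 p.1 ((memS p).mp hp).1.symm (Ne.symm ((memS p).mp hp).2),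
            vRT_S q.2 q.1 ((memS q).mp hq).1.symm (Ne.symm ((memS q).mp hq).2)]
        · rw [vRT_ne p.2 p.1 (Ne.symm ((memR p).mp hp).1),
            vRT_ne q.2 q.1 (Ne.symm ((memR q).mp hq).1)]
        · rw [vRT_ne p.2 p.1 (Ne.symm ((memT p).mp hp).1),
            vRT_ne q.2 q.1 (Ne.symm ((memT q).mp hq).1)]
      · rcases hf' with rfl | rfl | rfl | rfl
        · rw [vTT_D p.1 p.2 ((memD p).mp hp), vTT_D q.1 q.2 ((memD q).mp hq)]
        · rw [vTT_S p.1 p.2 ((memS p).mp hp).1 ((memS p).mp hp).2,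
            vTT_S q.1 q.2 ((memS q).mp hq).1 ((memS q).mp hq).2]
        · rw [vTT_ne p.1 p.2 ((memR p).mp hp).1, vTT_ne q.1 q.2 ((memR q).mp hq).1]
        · rw [vTT_ne p.1 p.2 ((memT p).mp hp).1, vTT_ne q.1 q.2 ((memT q).mp hq).1]
  exact ⟨hpw, hDne, hSne, hRne, hTne, hunion, tS, tR, tT, Set.mem_insert _ _, coh⟩


end JordanPaper

end
end

section
/- Let Ω be a nonempty finite set and J ⊆ M_Ω(ℝ) a linear subspace consisting of symmetric matrices and closed under the Jordan product A★B = (AB+BA)/2. If the operation ★ is associative on J, i.e. (x★y)★z = x★(y★z) for all x, y, z ∈ J, then x★y = x·y for all x, y ∈ J; in particular the elements of J pairwise commute under ordinary matrix multiplication. -/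
/-!
Associativity of `★` on the triple `(x, x, y)` says exactly that `x` commutes with
`C = xy - yx`, since the associator `(x ★ x) ★ y - x ★ (x ★ y)` is `[x, C] / 4`.
Then `C² = x (yC) - (yC) x` has trace zero, while `C` is skew-symmetric for symmetric
`x, y`; so `tr (Cᵀ C) = 0`, forcing `C = 0`, and for commuting `x, y` we get `x ★ y = xy`.
-/

open Matrix

noncomputable section

namespace JordanPaper

open scoped Classical

variable {Ω : Type*}

section JordanProduct

variable {n F : Type*} [Fintype n] [Field F]

theorem jmul_associator (x y : Matrix n n F) :
    jmul F (jmul F x x) y - jmul F x (jmul F x y) =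
      (2 : F)⁻¹ ^ 2 • (x * (x * y - y * x) - (x * y - y * x) * x) := by
  simp only [jmul, Matrix.mul_smul, Matrix.smul_mul, mul_add, add_mul, mul_sub, sub_mul,
    Matrix.mul_assoc]
  module

theorem commute_commutator_of_jmul_assoc [NeZero (2 : F)] {x y : Matrix n n F}
    (h : jmul F (jmul F x x) y = jmul F x (jmul F x y)) : Commute x (x * y - y * x) := by
  have hassoc := jmul_associator x y
  rw [h, sub_self, eq_comm, smul_eq_zero, sub_eq_zero] at hassoc
  exact hassoc.resolve_left (pow_ne_zero 2 (inv_ne_zero two_ne_zero))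

theorem jmul_eq_mul_of_commute [NeZero (2 : F)] {x y : Matrix n n F} (h : Commute x y) :
    jmul F x y = x * y := by
  rw [jmul, ← h.eq, ← two_smul F (x * y), smul_smul, inv_mul_cancel₀ two_ne_zero, one_smul]

end JordanProduct

section Commutator

variable {n R : Type*} [Fintype n]

theorem trace_commutator_mul_self_eq_zero [CommRing R] {x y : Matrix n n R}
    (h : Commute x (x * y - y * x)) : trace ((x * y - y * x) * (x * y - y * x)) = 0 := by
  have hcycle : trace (y * x * (x * y - y * x)) = trace (x * y * (x * y - y * x)) := by
    rw [Matrix.mul_assoc, h.eq, ← Matrix.mul_assoc, trace_mul_cycle]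
  rw [Matrix.sub_mul, trace_sub, hcycle, sub_self]

theorem _root_.Matrix.IsHermitian.conjTranspose_commutator [Ring R] [StarRing R]
    {x y : Matrix n n R} (hx : x.IsHermitian) (hy : y.IsHermitian) :
    (x * y - y * x)ᴴ = -(x * y - y * x) := by
  rw [conjTranspose_sub, conjTranspose_mul, conjTranspose_mul, hx.eq, hy.eq, neg_sub]

theorem _root_.Matrix.IsHermitian.commute_of_commute_commutator [CommRing R] [PartialOrder R]
    [StarRing R] [StarOrderedRing R] [NoZeroDivisors R] {x y : Matrix n n R}
    (hx : x.IsHermitian) (hy : y.IsHermitian) (h : Commute x (x * y - y * x)) :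
    Commute x y := by
  have htrace : trace ((x * y - y * x)ᴴ * (x * y - y * x)) = 0 := by
    rw [hx.conjTranspose_commutator hy, Matrix.neg_mul, trace_neg,
      trace_commutator_mul_self_eq_zero h, neg_zero]
  exact sub_eq_zero.mp (trace_conjTranspose_mul_self_eq_zero_iff.mp htrace)

end Commutator

theorem statement19_general {Ω : Type*} [Fintype Ω]
    (J : Submodule ℝ (Matrix Ω Ω ℝ))
    (hsym : ∀ x ∈ J, xᵀ = x)
    (hassoc : ∀ x ∈ J, ∀ y ∈ J, ∀ z ∈ J,
      jmul ℝ (jmul ℝ x y) z = jmul ℝ x (jmul ℝ y z)) :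
    ∀ x ∈ J, ∀ y ∈ J, jmul ℝ x y = x * y ∧ x * y = y * x := by
  intro x hx y hy
  have hermitian : ∀ z ∈ J, z.IsHermitian := fun z hz =>
    (conjTranspose_eq_transpose_of_trivial z).trans (hsym z hz)
  have hxy : Commute x y := (hermitian x hx).commute_of_commute_commutator (hermitian y hy)
    (commute_commutator_of_jmul_assoc (hassoc x hx x hx y hy))
  exact ⟨jmul_eq_mul_of_commute hxy, hxy⟩

theorem statement19 {Ω : Type*} [Fintype Ω] [Nonempty Ω]
    (J : Submodule ℝ (Matrix Ω Ω ℝ))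
    (hsym : ∀ x ∈ J, xᵀ = x)
    (hclosed : ∀ x ∈ J, ∀ y ∈ J, jmul ℝ x y ∈ J)
    (hassoc : ∀ x ∈ J, ∀ y ∈ J, ∀ z ∈ J,
      jmul ℝ (jmul ℝ x y) z = jmul ℝ x (jmul ℝ y z)) :
    ∀ x ∈ J, ∀ y ∈ J, jmul ℝ x y = x * y ∧ x * y = y * x :=
  statement19_general J hsym hassoc

end JordanPaper

end
end
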